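/- arXiv:2506.20344 — 12 statements merged into one kernel-verified Lean document; each statement's English description precedes it below -/
import Mathlib

section
/- For integers L ≥ 3 and reals λ > 0, y ≥ 0, if x > 0 and y satisfy both x^{2L-1} - √λ·y·x^{L-1} + λ·x = 0 and (2L-1)·x^{2L-2} - √λ·(L-1)·y·x^{L-2} + λ = 0, then y = ((L-2)/L)^{L/(2(L-1))} · λ^{1/(2(L-1))} + (L/(L-2))^{(L-2)/(2(L-1))} · λ^{1/(2(L-1))}. -/
/-- If `x > 0` is a common root of `f(x;y) = x^(2L-1) - √λ y x^(L-1) + λ x` and its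
`x`-derivative, then `y` equals the critical threshold value. -/
theorem stmt_0 (L : ℕ) (hL : 3 ≤ L) (lam y x : ℝ) (hlam : 0 < lam) (hy : 0 ≤ y)
    (hx : 0 < x)
    (h1 : x ^ (2 * L - 1) - Real.sqrt lam * y * x ^ (L - 1) + lam * x = 0)
    (h2 : (2 * (L : ℝ) - 1) * x ^ (2 * L - 2)
        - Real.sqrt lam * ((L : ℝ) - 1) * y * x ^ (L - 2) + lam = 0) :
    y = (((L : ℝ) - 2) / L) ^ ((L : ℝ) / (2 * ((L : ℝ) - 1)))
          * lam ^ ((1 : ℝ) / (2 * ((L : ℝ) - 1)))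
      + ((L : ℝ) / ((L : ℝ) - 2)) ^ (((L : ℝ) - 2) / (2 * ((L : ℝ) - 1)))
          * lam ^ ((1 : ℝ) / (2 * ((L : ℝ) - 1))) := by
  have hL3 : (3:ℝ) ≤ (L:ℝ) := by exact_mod_cast hL
  set l : ℝ := (L:ℝ) with hldef
  have hl2 : (0:ℝ) < l - 2 := by linarith
  have hl1 : (0:ℝ) < l - 1 := by linarith
  have hlpos : (0:ℝ) < l := by linarith
  have hs : 0 < Real.sqrt lam := Real.sqrt_pos.mpr hlam
  set A := x ^ (2*L-2) with hAdef
  set B := x ^ (L-2) with hBdef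
  have hApos : 0 < A := pow_pos hx _
  have hBpos : 0 < B := pow_pos hx _
  -- rewrite h1 with A, B
  have p1 : x ^ (2*L-1) = A * x := by rw [hAdef, ← pow_succ]; congr 1; omega
  have p2 : x ^ (L-1) = B * x := by rw [hBdef, ← pow_succ]; congr 1; omega
  rw [p1, p2] at h1
  have hmul : (A - Real.sqrt lam * y * B + lam) * x = 0 := by linear_combination h1
  have h1' : A - Real.sqrt lam * y * B + lam = 0 := by
    rcases mul_eq_zero.mp hmul with h | h
    · exact h
    · exact absurd h hx.ne'
  -- solve for A
  have hlA : l * A = (l - 2) * lam := by linear_combination h2 - (l-1) * h1'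
  set c : ℝ := (l-2)/l with hcdef
  have hcpos : 0 < c := div_pos hl2 hlpos
  have hA : A = c * lam := by
    rw [hcdef]
    field_simp
    linarith [hlA]
  -- solve for y
  have hy2 : y = (A + lam) / (Real.sqrt lam * B) := by
    rw [eq_div_iff (by positivity)]
    linear_combination -h1'
  -- express B via rpow
  set p : ℝ := 1/(2*(l-1)) with hpdef
  have hppos : 0 < p := by positivity
  have hxe : x = A ^ (((2*L-2 : ℕ):ℝ))⁻¹ := by
    rw [hAdef, Real.pow_rpow_inv_natCast hx.le (by omega)]
  have hcast1 : ((2*L-2 : ℕ):ℝ) = 2*l - 2 := by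
    push_cast [Nat.cast_sub (by omega : 2 ≤ 2*L)]; ring
  have hcast2 : ((L-2 : ℕ):ℝ) = l - 2 := by
    push_cast [Nat.cast_sub (by omega : 2 ≤ L)]; ring
  have hB : B = A ^ ((l-2) * p) := by
    rw [hBdef]
    conv_lhs => rw [hxe]
    rw [← Real.rpow_natCast (A ^ _) (L-2), ← Real.rpow_mul hApos.le]
    congr 1
    rw [hcast1, hcast2, hpdef]
    have h2l : (2*l-2 : ℝ) ≠ 0 := by linarith
    have h2l1 : (2*(l-1) : ℝ) ≠ 0 := by linarith
    field_simp
  -- exponent identities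
  have hsum1 : l * p + (l-2) * p = 1 := by
    rw [hpdef]; field_simp; ring
  have hsum2 : p + 1/2 + (l-2) * p = 1 := by
    rw [hpdef]; field_simp; ring
  set d : ℝ := l / (l-2) with hddef
  have hdpos : 0 < d := div_pos hlpos hl2
  have hcd : c * d = 1 := by
    rw [hcdef, hddef]; field_simp
  -- key term identities
  have e1 : c ^ (l * p) * lam ^ p * (lam ^ ((1:ℝ)/2) * ((c * lam) ^ ((l-2) * p)))
      = c * lam := by
    rw [Real.mul_rpow hcpos.le hlam.le]
    rw [show c ^ (l * p) * lam ^ p *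
        (lam ^ ((1:ℝ)/2) * (c ^ ((l-2)*p) * lam ^ ((l-2)*p)))
        = (c ^ (l*p) * c ^ ((l-2)*p)) * (lam ^ p * lam ^ ((1:ℝ)/2) * lam ^ ((l-2)*p))
        from by ring]
    rw [← Real.rpow_add hcpos, ← Real.rpow_add hlam, ← Real.rpow_add hlam, hsum1,
      show p + 1/2 + (l-2)*p = 1 from hsum2, Real.rpow_one, Real.rpow_one]
  have e2 : d ^ ((l-2) * p) * lam ^ p * (lam ^ ((1:ℝ)/2) * ((c * lam) ^ ((l-2) * p)))
      = lam := by
    rw [Real.mul_rpow hcpos.le hlam.le]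
    rw [show d ^ ((l-2) * p) * lam ^ p *
        (lam ^ ((1:ℝ)/2) * (c ^ ((l-2)*p) * lam ^ ((l-2)*p)))
        = (d ^ ((l-2)*p) * c ^ ((l-2)*p)) * (lam ^ p * lam ^ ((1:ℝ)/2) * lam ^ ((l-2)*p))
        from by ring]
    rw [← Real.mul_rpow hdpos.le hcpos.le, mul_comm d c, hcd, Real.one_rpow,
      ← Real.rpow_add hlam, ← Real.rpow_add hlam, hsum2, Real.rpow_one, one_mul]
  -- finish
  have q1 : l / (2*(l-1)) = l * p := by rw [hpdef]; ring
  have q2 : (l-2) / (2*(l-1)) = (l-2) * p := by rw [hpdef]; ring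
  rw [hy2, hB, hA, Real.sqrt_eq_rpow, q1, q2, div_eq_iff (by positivity)]
  linear_combination -e1 - e2
end

section
/- For integers L ≥ 3 and reals λ > 0, y ≥ 0, if x > 0 satisfies both f(x;y) = x^{2L-1} - √λ·y·x^{L-1} + λ·x = 0 and ∂_x f(x;y) = (2L-1)·x^{2L-2} - √λ·(L-1)·y·x^{L-2} + λ = 0, then x = (λ·(L-2)/L)^{1/(2L-2)}. -/
/-- If `x > 0` is a common root of `f(x;y) = x^(2L-1) - √λ y x^(L-1) + λ x` and its
`x`-derivative, then `x = (λ(L-2)/L)^(1/(2L-2))`. -/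
theorem stmt_1 (L : ℕ) (hL : 3 ≤ L) (lam y x : ℝ) (hlam : 0 < lam) (hy : 0 ≤ y)
    (hx : 0 < x)
    (h1 : x ^ (2 * L - 1) - Real.sqrt lam * y * x ^ (L - 1) + lam * x = 0)
    (h2 : (2 * (L : ℝ) - 1) * x ^ (2 * L - 2)
        - Real.sqrt lam * ((L : ℝ) - 1) * y * x ^ (L - 2) + lam = 0) :
    x = (lam * ((L : ℝ) - 2) / L) ^ ((1 : ℝ) / (2 * (L : ℝ) - 2)) := by
  obtain ⟨k, rfl⟩ := Nat.exists_eq_add_of_le hL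
  rw [show 2 * (3 + k) - 1 = 2 * k + 5 from by omega,
      show 3 + k - 1 = k + 2 from by omega] at h1
  rw [show 2 * (3 + k) - 2 = 2 * k + 4 from by omega,
      show 3 + k - 2 = k + 1 from by omega] at h2
  push_cast at h2 ⊢
  have hc : ((3 : ℝ) + k) * x ^ (2 * k + 5) = lam * ((k : ℝ) + 1) * x := by
    linear_combination x * h2 - ((k : ℝ) + 2) * h1
  have hp : x ^ (2 * k + 4) = lam * ((3 : ℝ) + (k : ℝ) - 2) / ((3 : ℝ) + k) := by
    have hk3 : (0 : ℝ) < 3 + (k : ℝ) := by positivity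
    field_simp
    have := mul_right_cancel₀ hx.ne' (by linear_combination hc :
      ((3 : ℝ) + k) * x ^ (2 * k + 4) * x = (lam * ((k : ℝ) + 1)) * x)
    linear_combination this
  rw [show lam * ((3 : ℝ) + (k : ℝ) - 2) / ((3 : ℝ) + k) = x ^ (2 * k + 4) from hp.symm,
      show (1 : ℝ) / (2 * (3 + (k : ℝ)) - 2) = (((2 * k + 4 : ℕ) : ℝ))⁻¹ by
        push_cast; rw [one_div]; ring_nf]
  exact (Real.pow_rpow_inv_natCast hx.le (by omega)).symm
end

section
/- Let L ≥ 3 be an integer, λ > 0, and define y* = (((L-2)/L)^{L/(2L-2)} + (L/(L-2))^{(L-2)/(2L-2)}) · λ^{1/(2L-2)}. For y ≥ 0, the equation x^{2L-1} - √λ·y·x^{L-1} + λ·x = 0 has exactly two distinct positive solutions x if y > y*, exactly one positive solution if y = y*, and no positive solution if y < y*. -/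
/-!
For `x > 0` the left-hand side equals `√λ x^(L-1) (h x - y)` with
`h x = levelFun L λ x = x^L / √λ + √λ / x^(L-2)`, so the positive solutions are the level set `h = y`.
The function `h` tends to `+∞` at `0⁺` and at `+∞`, and `h'` has the sign of
`L x^(2L-2) - (L-2) λ`: it decreases up to `x* = ((L-2) λ / L)^(1/(2L-2))` and increases
afterwards. Hence each level above `h x* = y*` is hit exactly twice, the level `y*` only at `x*`,
and levels below `y*` never.
-/

open Filter Topology Set

section ValleyLevelSets

variable {f : ℝ → ℝ} {c m y : ℝ}

theorem apply_lt_apply_of_valley (hanti : StrictAntiOn f (Ioc c m))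
    (hmono : StrictMonoOn f (Ici m)) {x : ℝ} (hx : c < x) (hxm : x ≠ m) : f m < f x := by
  rcases hxm.lt_or_gt with hlt | hgt
  · exact hanti ⟨hx, hlt.le⟩ ⟨hx.trans hlt, le_rfl⟩ hlt
  · exact hmono (mem_Ici.2 le_rfl) hgt.le hgt

theorem setOf_apply_eq_eq_empty_of_valley (hanti : StrictAntiOn f (Ioc c m))
    (hmono : StrictMonoOn f (Ici m)) (hy : y < f m) : {x | c < x ∧ f x = y} = ∅ := by
  refine eq_empty_of_forall_notMem fun x ⟨hx, hfx⟩ => ?_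
  rcases eq_or_ne x m with rfl | hxm
  · exact hy.ne' hfx
  · exact (hy.trans (apply_lt_apply_of_valley hanti hmono hx hxm)).ne' hfx

theorem setOf_apply_eq_apply_eq_singleton_of_valley (hanti : StrictAntiOn f (Ioc c m))
    (hmono : StrictMonoOn f (Ici m)) (hcm : c < m) : {x | c < x ∧ f x = f m} = {m} := by
  ext x
  refine ⟨fun ⟨hx, hfx⟩ => ?_, fun hx => ⟨hx ▸ hcm, hx ▸ rfl⟩⟩
  by_contra hxm
  exact (apply_lt_apply_of_valley hanti hmono hx hxm).ne' hfx

theorem exists_lt_apply_eq_of_valley (hcont : ContinuousOn f (Ioi c))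
    (hlim : Tendsto f (𝓝[>] c) atTop) (hcm : c < m) (hy : f m < y) :
    ∃ a, c < a ∧ a < m ∧ f a = y := by
  obtain ⟨x₀, hfx₀, hx₀⟩ := ((hlim.eventually_gt_atTop y).and (Ioo_mem_nhdsGT hcm)).exists
  obtain ⟨a, ha, hfa⟩ := intermediate_value_Icc' hx₀.2.le
    (hcont.mono fun x hx => hx₀.1.trans_le hx.1) ⟨hy.le, hfx₀.le⟩
  exact ⟨a, hx₀.1.trans_le ha.1, ha.2.lt_of_ne (by rintro rfl; exact hy.ne hfa), hfa⟩

theorem exists_gt_apply_eq_of_valley (hcont : ContinuousOn f (Ioi c))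
    (hlim : Tendsto f atTop atTop) (hcm : c < m) (hy : f m < y) :
    ∃ b, m < b ∧ f b = y := by
  obtain ⟨x₁, hfx₁, hx₁⟩ :=
    ((hlim.eventually_gt_atTop y).and (eventually_gt_atTop m)).exists
  obtain ⟨b, hb, hfb⟩ := intermediate_value_Icc hx₁.le
    (hcont.mono fun x hx => hcm.trans_le hx.1) ⟨hy.le, hfx₁.le⟩
  exact ⟨b, hb.1.lt_of_ne (by rintro rfl; exact hy.ne hfb), hfb⟩

theorem exists_setOf_apply_eq_eq_pair_of_valley (hcont : ContinuousOn f (Ioi c))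
    (hanti : StrictAntiOn f (Ioc c m)) (hmono : StrictMonoOn f (Ici m))
    (hlim₀ : Tendsto f (𝓝[>] c) atTop) (hlim : Tendsto f atTop atTop) (hcm : c < m)
    (hy : f m < y) : ∃ a b, a < m ∧ m < b ∧ {x | c < x ∧ f x = y} = {a, b} := by
  obtain ⟨a, hca, ham, hfa⟩ := exists_lt_apply_eq_of_valley hcont hlim₀ hcm hy
  obtain ⟨b, hmb, hfb⟩ := exists_gt_apply_eq_of_valley hcont hlim hcm hy
  refine ⟨a, b, ham, hmb, Set.ext fun x => ⟨fun ⟨hx, hfx⟩ => ?_, ?_⟩⟩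
  · rcases le_or_gt x m with hxm | hxm
    · exact Or.inl (hanti.injOn ⟨hx, hxm⟩ ⟨hca, ham.le⟩ (hfx.trans hfa.symm))
    · exact Or.inr (hmono.injOn (mem_Ici.2 hxm.le) (mem_Ici.2 hmb.le) (hfx.trans hfb.symm))
  · rintro (rfl | rfl)
    exacts [⟨hca, hfa⟩, ⟨hcm.trans hmb, hfb⟩]

end ValleyLevelSets

section LevelFun

noncomputable def levelFun (L : ℕ) (lam x : ℝ) : ℝ := x ^ L / √lam + √lam / x ^ (L - 2)

-- Split as a product so that its powers separate into the powers of `(L-2)/L` and of `λ` in `y*`.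
noncomputable def criticalPoint (L : ℕ) (lam : ℝ) : ℝ :=
  (((L : ℝ) - 2) / L) ^ ((1 : ℝ) / (2 * (L : ℝ) - 2)) *
    lam ^ ((1 : ℝ) / (2 * (L : ℝ) - 2))

variable {L : ℕ} {lam x y : ℝ}

theorem equation_eq_sqrt_mul_levelFun_sub (hL : 2 ≤ L) (hlam : 0 < lam) (hx : x ≠ 0) :
    x ^ (2 * L - 1) - √lam * y * x ^ (L - 1) + lam * x
      = √lam * x ^ (L - 1) * (levelFun L lam x - y) := by
  obtain ⟨n, rfl⟩ : ∃ n, L = n + 2 := ⟨L - 2, by omega⟩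
  obtain ⟨s, hs, rfl⟩ : ∃ s, 0 < s ∧ lam = s ^ 2 :=
    ⟨√lam, Real.sqrt_pos.2 hlam, (Real.sq_sqrt hlam.le).symm⟩
  rw [levelFun, Real.sqrt_sq hs.le, show 2 * (n + 2) - 1 = 2 * n + 3 by omega,
    show n + 2 - 1 = n + 1 by omega, Nat.add_sub_cancel]
  field_simp
  ring

theorem equation_eq_zero_iff (hL : 2 ≤ L) (hlam : 0 < lam) (hx : 0 < x) :
    x ^ (2 * L - 1) - √lam * y * x ^ (L - 1) + lam * x = 0 ↔ levelFun L lam x = y := by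
  rw [equation_eq_sqrt_mul_levelFun_sub hL hlam hx.ne', mul_eq_zero_iff_left, sub_eq_zero]
  have := Real.sqrt_pos.2 hlam
  positivity

theorem hasDerivAt_levelFun (hL : 3 ≤ L) (hlam : 0 < lam) (hx : 0 < x) :
    HasDerivAt (levelFun L lam)
      (L * (x ^ (2 * L - 2) - ((L : ℝ) - 2) / L * lam) / (√lam * x ^ (L - 1))) x := by
  have hxL : x ^ (L - 2) ≠ 0 := pow_ne_zero _ hx.ne'
  have h := ((hasDerivAt_pow L x).div_const √lam).add
    ((hasDerivAt_const x √lam).div (hasDerivAt_pow (L - 2) x) hxL)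
  refine h.congr_deriv ?_
  obtain ⟨n, rfl⟩ : ∃ n, L = n + 3 := ⟨L - 3, by omega⟩
  obtain ⟨s, hs, rfl⟩ : ∃ s, 0 < s ∧ lam = s ^ 2 :=
    ⟨√lam, Real.sqrt_pos.2 hlam, (Real.sq_sqrt hlam.le).symm⟩
  rw [Real.sqrt_sq hs.le, show 2 * (n + 3) - 2 = 2 * n + 4 by omega,
    show n + 3 - 1 = n + 2 by omega, show n + 3 - 2 = n + 1 by omega, Nat.add_sub_cancel]
  field_simp
  push_cast
  ring

theorem continuousOn_levelFun : ContinuousOn (levelFun L lam) (Ioi 0) :=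
  ((continuousOn_pow L).div_const _).add
    (continuousOn_const.div (continuousOn_pow _) fun _ hx => pow_ne_zero _ (ne_of_gt hx))

theorem tendsto_levelFun_atTop (hL : L ≠ 0) (hlam : 0 < lam) :
    Tendsto (levelFun L lam) atTop atTop :=
  tendsto_atTop_add_right_of_le' _ 0
    ((tendsto_pow_atTop hL).atTop_div_const (Real.sqrt_pos.2 hlam))
    ((eventually_ge_atTop 0).mono fun x hx => by positivity)

theorem tendsto_levelFun_nhdsGT_zero (hL : 3 ≤ L) (hlam : 0 < lam) :
    Tendsto (levelFun L lam) (𝓝[>] 0) atTop := by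
  have hpow : Tendsto (fun x : ℝ => x ^ (L - 2)) (𝓝[>] 0) (𝓝[>] 0) := by
    refine tendsto_nhdsWithin_of_tendsto_nhds_of_eventually_within _ ?_ ?_
    · simpa [zero_pow (by omega : L - 2 ≠ 0)] using
        ((continuous_pow (L - 2)).tendsto (0 : ℝ)).mono_left nhdsWithin_le_nhds
    · filter_upwards [self_mem_nhdsWithin] with x (hx : 0 < x) using pow_pos hx _
  refine tendsto_atTop_add_left_of_le' _ 0
    (by filter_upwards [self_mem_nhdsWithin] with x (hx : 0 < x); positivity) ?_
  simpa only [div_eq_mul_inv, Pi.inv_apply] using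
    hpow.inv_tendsto_nhdsGT_zero.const_mul_atTop (Real.sqrt_pos.2 hlam)

theorem rpow_natCast_div_eq_pow {t : ℝ} (ht : 0 ≤ t) (k : ℕ) (p : ℝ) :
    t ^ ((k : ℝ) / p) = (t ^ (1 / p)) ^ k := by
  rw [← Real.rpow_natCast, ← Real.rpow_mul ht, one_div_mul_eq_div]

theorem rpow_one_div_two_mul_sub_two_pow (hL : 2 ≤ L) {t : ℝ} (ht : 0 ≤ t) :
    (t ^ ((1 : ℝ) / (2 * (L : ℝ) - 2))) ^ (2 * L - 2) = t := by
  have hp : ((2 * L - 2 : ℕ) : ℝ) = 2 * (L : ℝ) - 2 := by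
    rw [Nat.cast_sub (by omega)]; push_cast; ring
  have hp0 : 2 * (L : ℝ) - 2 ≠ 0 := by
    rw [← hp]; exact_mod_cast (by omega : 2 * L - 2 ≠ 0)
  rw [← rpow_natCast_div_eq_pow ht, hp, div_self hp0, Real.rpow_one]

theorem criticalPoint_pos (hL : 3 ≤ L) (hlam : 0 < lam) : 0 < criticalPoint L lam := by
  have : (0 : ℝ) < ((L : ℝ) - 2) / L := by
    have : (3 : ℝ) ≤ L := by exact_mod_cast hL
    exact div_pos (by linarith) (by linarith)
  unfold criticalPoint
  positivity

theorem criticalPoint_pow (hL : 3 ≤ L) (hlam : 0 < lam) :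
    criticalPoint L lam ^ (2 * L - 2) = ((L : ℝ) - 2) / L * lam := by
  have : (3 : ℝ) ≤ L := by exact_mod_cast hL
  rw [criticalPoint, mul_pow, rpow_one_div_two_mul_sub_two_pow (by omega) hlam.le,
    rpow_one_div_two_mul_sub_two_pow (by omega) (div_nonneg (by linarith) (by linarith))]

theorem levelFun_strictAntiOn (hL : 3 ≤ L) (hlam : 0 < lam) :
    StrictAntiOn (levelFun L lam) (Ioc 0 (criticalPoint L lam)) := by
  refine strictAntiOn_of_deriv_neg (convex_Ioc _ _)
    (continuousOn_levelFun.mono Ioc_subset_Ioi_self) fun x hx => ?_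
  rw [interior_Ioc] at hx
  have hx0 : 0 < x := hx.1
  have hlt : x ^ (2 * L - 2) < criticalPoint L lam ^ (2 * L - 2) :=
    pow_lt_pow_left₀ hx.2 hx0.le (by omega)
  rw [(hasDerivAt_levelFun hL hlam hx0).deriv, ← criticalPoint_pow hL hlam]
  have := Real.sqrt_pos.2 hlam
  exact div_neg_of_neg_of_pos (mul_neg_of_pos_of_neg (by positivity) (sub_neg.2 hlt))
    (by positivity)

theorem levelFun_strictMonoOn (hL : 3 ≤ L) (hlam : 0 < lam) :
    StrictMonoOn (levelFun L lam) (Ici (criticalPoint L lam)) := by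
  have hc := criticalPoint_pos hL hlam
  refine strictMonoOn_of_deriv_pos (convex_Ici _)
    (continuousOn_levelFun.mono fun x hx => hc.trans_le hx) fun x hx => ?_
  rw [interior_Ici] at hx
  have hx0 : 0 < x := hc.trans hx
  have hlt : criticalPoint L lam ^ (2 * L - 2) < x ^ (2 * L - 2) :=
    pow_lt_pow_left₀ hx hc.le (by omega)
  rw [(hasDerivAt_levelFun hL hlam hx0).deriv, ← criticalPoint_pow hL hlam]
  have := Real.sqrt_pos.2 hlam
  exact div_pos (mul_pos (by positivity) (sub_pos.2 hlt)) (by positivity)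

theorem levelFun_criticalPoint (hL : 3 ≤ L) (hlam : 0 < lam) :
    levelFun L lam (criticalPoint L lam)
      = ((((L : ℝ) - 2) / L) ^ ((L : ℝ) / (2 * (L : ℝ) - 2))
        + ((L : ℝ) / ((L : ℝ) - 2)) ^ (((L : ℝ) - 2) / (2 * (L : ℝ) - 2)))
        * lam ^ ((1 : ℝ) / (2 * (L : ℝ) - 2)) := by
  have hL' : (3 : ℝ) ≤ L := by exact_mod_cast hL
  have hr : (0 : ℝ) < ((L : ℝ) - 2) / L := div_pos (by linarith) (by linarith)
  set p : ℝ := 2 * (L : ℝ) - 2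
  set ρ := (((L : ℝ) - 2) / L) ^ ((1 : ℝ) / p)
  set a := lam ^ ((1 : ℝ) / p)
  have hρ : 0 < ρ := by positivity
  have ha : 0 < a := by positivity
  have hsqrt : √lam = a ^ (L - 1) := by
    rw [← Real.sqrt_sq (pow_nonneg ha.le _), ← pow_mul, show (L - 1) * 2 = 2 * L - 2 by omega,
      rpow_one_div_two_mul_sub_two_pow (by omega) hlam.le]
  have h₁ : (((L : ℝ) - 2) / L) ^ ((L : ℝ) / p) = ρ ^ L := rpow_natCast_div_eq_pow hr.le L p
  have h₂ : ((L : ℝ) / ((L : ℝ) - 2)) ^ (((L : ℝ) - 2) / p) = (ρ ^ (L - 2))⁻¹ := by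
    rw [← rpow_natCast_div_eq_pow hr.le, Nat.cast_sub (by omega), Nat.cast_ofNat,
      ← Real.inv_rpow hr.le, inv_div]
  rw [h₁, h₂, show criticalPoint L lam = ρ * a from rfl, levelFun, hsqrt]
  clear_value ρ a
  obtain ⟨n, rfl⟩ : ∃ n, L = n + 3 := ⟨L - 3, by omega⟩
  rw [show n + 3 - 1 = n + 2 by omega, show n + 3 - 2 = n + 1 by omega]
  field_simp
  ring

end LevelFun

theorem stmt_4_general (L : ℕ) (hL : 3 ≤ L) (lam y : ℝ) (hlam : 0 < lam) :
    let ystar : ℝ := ((((L : ℝ) - 2) / L) ^ ((L : ℝ) / (2 * (L : ℝ) - 2))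
        + ((L : ℝ) / ((L : ℝ) - 2)) ^ (((L : ℝ) - 2) / (2 * (L : ℝ) - 2)))
        * lam ^ ((1 : ℝ) / (2 * (L : ℝ) - 2))
    let S : Set ℝ :=
      {x : ℝ | 0 < x ∧ x ^ (2 * L - 1) - Real.sqrt lam * y * x ^ (L - 1) + lam * x = 0}
    (ystar < y → ∃ a b : ℝ, a ≠ b ∧ S = {a, b}) ∧
      (y = ystar → ∃ a : ℝ, S = {a}) ∧
      (y < ystar → S = ∅) := by
  intro ystar S
  have hS : S = {x | 0 < x ∧ levelFun L lam x = y} :=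
    Set.ext fun x => and_congr_right fun hx => equation_eq_zero_iff (by omega) hlam hx
  have hmin : levelFun L lam (criticalPoint L lam) = ystar := levelFun_criticalPoint hL hlam
  have hc := criticalPoint_pos hL hlam
  have hanti := levelFun_strictAntiOn hL hlam
  have hmono := levelFun_strictMonoOn hL hlam
  rw [hS, ← hmin]
  refine ⟨fun hy => ?_, fun hy => ⟨criticalPoint L lam, ?_⟩,
    setOf_apply_eq_eq_empty_of_valley hanti hmono⟩
  · obtain ⟨a, b, ham, hmb, hab⟩ := exists_setOf_apply_eq_eq_pair_of_valley
      continuousOn_levelFun hanti hmono (tendsto_levelFun_nhdsGT_zero hL hlam)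
      (tendsto_levelFun_atTop (by omega) hlam) hc hy
    exact ⟨a, b, (ham.trans hmb).ne, hab⟩
  · exact hy ▸ setOf_apply_eq_apply_eq_singleton_of_valley hanti hmono hc

/-- For `y ≥ 0`, the equation `x^(2L-1) - √λ y x^(L-1) + λ x = 0` has exactly two distinct
positive solutions if `y > y*`, exactly one if `y = y*`, and none if `y < y*`. -/
theorem stmt_4 (L : ℕ) (hL : 3 ≤ L) (lam y : ℝ) (hlam : 0 < lam) (hy : 0 ≤ y) :
    let ystar : ℝ := ((((L : ℝ) - 2) / L) ^ ((L : ℝ) / (2 * (L : ℝ) - 2))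
        + ((L : ℝ) / ((L : ℝ) - 2)) ^ (((L : ℝ) - 2) / (2 * (L : ℝ) - 2)))
        * lam ^ ((1 : ℝ) / (2 * (L : ℝ) - 2))
    let S : Set ℝ :=
      {x : ℝ | 0 < x ∧ x ^ (2 * L - 1) - Real.sqrt lam * y * x ^ (L - 1) + lam * x = 0}
    (ystar < y → ∃ a b : ℝ, a ≠ b ∧ S = {a, b}) ∧
      (y = ystar → ∃ a : ℝ, S = {a}) ∧
      (y < ystar → S = ∅) :=
  stmt_4_general L hL lam y hlam
end

section
/- Let L ≥ 3 be an integer, λ > 0, and let x* = ((L-2)/L)^{1/(2L-2)} · λ^{1/(2L-2)} and y* = (((L-2)/L)^{L/(2L-2)} + (L/(L-2))^{(L-2)/(2L-2)}) · λ^{1/(2L-2)}. If y > y* and z₁ > z₂ > 0 are the two positive roots of f(x;y) = x^{2L-1} - √λ·y·x^{L-1} + λ·x = 0, then z₁ > x* > z₂. -/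
/-!
Write `L = n + 2` and `s = √λ y`. Dividing by `x > 0`, the positive roots of `f(·; y)` are the
positive roots of `x ^ (2n+2) - s x ^ n + λ`. Eliminating `s` between two roots `a < b` gives
`λ (b ^ n - a ^ n) = a ^ n b ^ n (b ^ (n+2) - a ^ (n+2))`, and the strict weighted AM-GM
inequality `(p + q) a ^ p b ^ q < p a ^ (p+q) + q b ^ (p+q)`, applied with `(p, q) = (n, n+2)` and
`(n+2, n)`, turns this identity into `(n+2) a ^ (2n+2) < n λ < (n+2) b ^ (2n+2)`.
Since `x* ^ (2n+2) = n λ / (n+2)`, this says `a < x* < b`.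
-/

open Real

theorem add_mul_pow_mul_pow_lt_of_ne {p q : ℕ} (hp : 0 < p) (hq : 0 < q) {a b : ℝ}
    (ha : 0 ≤ a) (hb : 0 ≤ b) (hab : a ≠ b) :
    (p + q : ℝ) * (a ^ p * b ^ q) < p * a ^ (p + q) + q * b ^ (p + q) := by
  have hpq : (0 : ℝ) < p + q := by positivity
  have hroot : ∀ x : ℝ, 0 ≤ x → ∀ k : ℕ, (x ^ (p + q)) ^ ((k : ℝ) / (p + q)) = x ^ k :=
    fun x hx k => by
      rw [← rpow_natCast x (p + q), ← rpow_mul hx, Nat.cast_add, mul_div_cancel₀ _ hpq.ne',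
        rpow_natCast]
  have hamgm := (geom_mean_lt_arith_mean2_weighted_iff_of_pos (w₁ := p / (p + q))
    (w₂ := q / (p + q)) (by positivity) (by positivity) (pow_nonneg ha (p + q))
    (pow_nonneg hb (p + q)) (by field_simp)).mpr
    fun h => hab ((pow_left_inj₀ ha hb (by omega)).mp h)
  rw [hroot a ha, hroot b hb] at hamgm
  calc (p + q : ℝ) * (a ^ p * b ^ q)
      < (p + q) * (p / (p + q) * a ^ (p + q) + q / (p + q) * b ^ (p + q)) :=
        mul_lt_mul_of_pos_left hamgm hpq
    _ = p * a ^ (p + q) + q * b ^ (p + q) := by field_simp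

theorem pow_add_eq_mul_pow_of_root {n : ℕ} {s lam x : ℝ} (hx : x ≠ 0)
    (h : x ^ (2 * n + 3) - s * x ^ (n + 1) + lam * x = 0) :
    x ^ (2 * n + 2) + lam = s * x ^ n :=
  mul_left_cancel₀ hx (by linear_combination h)

theorem mul_pow_lt_lt_mul_pow_of_roots {n : ℕ} (hn : 0 < n) {s lam a b : ℝ} (ha : 0 < a)
    (hab : a < b) (hra : a ^ (2 * n + 2) + lam = s * a ^ n)
    (hrb : b ^ (2 * n + 2) + lam = s * b ^ n) :
    (n + 2) * a ^ (2 * n + 2) < n * lam ∧ n * lam < (n + 2) * b ^ (2 * n + 2) := by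
  have hb : 0 < b := ha.trans hab
  have hgap : 0 < b ^ n - a ^ n := sub_pos.mpr (pow_lt_pow_left₀ hab ha.le hn.ne')
  have hlam : lam * (b ^ n - a ^ n) = a ^ n * b ^ n * (b ^ (n + 2) - a ^ (n + 2)) := by
    linear_combination b ^ n * hra - a ^ n * hrb
  have amgm_ab := add_mul_pow_mul_pow_lt_of_ne hn (by omega : 0 < n + 2) ha.le hb.le hab.ne
  have amgm_ba := add_mul_pow_mul_pow_lt_of_ne (by omega : 0 < n + 2) hn ha.le hb.le hab.ne
  rw [show n + (n + 2) = 2 * n + 2 by ring] at amgm_ab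
  rw [show n + 2 + n = 2 * n + 2 by ring] at amgm_ba
  push_cast at amgm_ab amgm_ba
  constructor
  · have h := mul_lt_mul_of_pos_left amgm_ba (pow_pos ha (2 * n))
    have hprod : 0 < a ^ n * (b ^ n - a ^ n) * (n * lam - (n + 2) * a ^ (2 * n + 2)) := by
      linear_combination h - n * a ^ n * hlam
    exact sub_pos.mp (pos_of_mul_pos_right hprod (mul_pos (pow_pos ha n) hgap).le)
  · have h := mul_lt_mul_of_pos_left amgm_ab (pow_pos hb (2 * n))
    have hprod : 0 < b ^ n * (b ^ n - a ^ n) * ((n + 2) * b ^ (2 * n + 2) - n * lam) := by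
      linear_combination h + n * b ^ n * hlam
    exact sub_pos.mp (pos_of_mul_pos_right hprod (mul_pos (pow_pos hb n) hgap).le)

theorem stmt_5_general (L : ℕ) (hL : 3 ≤ L) (lam y z1 z2 : ℝ) (hlam : 0 < lam)
    (hz2 : 0 < z2) (hz12 : z2 < z1)
    (h1 : z1 ^ (2 * L - 1) - Real.sqrt lam * y * z1 ^ (L - 1) + lam * z1 = 0)
    (h2 : z2 ^ (2 * L - 1) - Real.sqrt lam * y * z2 ^ (L - 1) + lam * z2 = 0) :
    (((L : ℝ) - 2) / L) ^ ((1 : ℝ) / (2 * (L : ℝ) - 2))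
        * lam ^ ((1 : ℝ) / (2 * (L : ℝ) - 2)) < z1 ∧
      z2 < (((L : ℝ) - 2) / L) ^ ((1 : ℝ) / (2 * (L : ℝ) - 2))
        * lam ^ ((1 : ℝ) / (2 * (L : ℝ) - 2)) := by
  obtain ⟨n, hn, rfl⟩ : ∃ n, 0 < n ∧ L = n + 2 := ⟨L - 2, by omega, by omega⟩
  rw [show 2 * (n + 2) - 1 = 2 * n + 3 by omega, show n + 2 - 1 = n + 1 by omega] at h1 h2
  have hz1 : 0 < z1 := hz2.trans hz12
  obtain ⟨hz2_lt, hz1_gt⟩ := mul_pow_lt_lt_mul_pow_of_roots hn hz2 hz12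
    (pow_add_eq_mul_pow_of_root hz2.ne' h2) (pow_add_eq_mul_pow_of_root hz1.ne' h1)
  have hdeg : 2 * ((n + 2 : ℕ) : ℝ) - 2 = (2 * n + 2 : ℕ) := by push_cast; ring
  have hc : ((n + 2 : ℕ) : ℝ) - 2 = n := by push_cast; ring
  rw [hdeg, hc, ← mul_rpow (by positivity) hlam.le, one_div]
  set xs := ((n : ℝ) / (n + 2 : ℕ) * lam) ^ ((2 * n + 2 : ℕ) : ℝ)⁻¹
  have hxs : xs ^ (2 * n + 2) = n * lam / (n + 2) := by
    rw [rpow_inv_natCast_pow (by positivity) (by omega)]; push_cast; ring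
  have hn2 : (0 : ℝ) < n + 2 := by positivity
  have hxs_nonneg : 0 ≤ xs := rpow_nonneg (by positivity) _
  constructor
  · rw [← pow_lt_pow_iff_left₀ hxs_nonneg hz1.le (by omega : 2 * n + 2 ≠ 0), hxs,
      div_lt_iff₀ hn2]
    linarith
  · rw [← pow_lt_pow_iff_left₀ hz2.le hxs_nonneg (by omega : 2 * n + 2 ≠ 0), hxs,
      lt_div_iff₀ hn2]
    linarith

/-- If `y > y*` and `z₁ > z₂ > 0` are two positive roots of
`f(x;y) = x^(2L-1) - √λ y x^(L-1) + λ x = 0`, then `z₁ > x* > z₂`. -/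
theorem stmt_5 (L : ℕ) (hL : 3 ≤ L) (lam y z1 z2 : ℝ) (hlam : 0 < lam)
    (hy : ((((L : ℝ) - 2) / L) ^ ((L : ℝ) / (2 * (L : ℝ) - 2))
        + ((L : ℝ) / ((L : ℝ) - 2)) ^ (((L : ℝ) - 2) / (2 * (L : ℝ) - 2)))
        * lam ^ ((1 : ℝ) / (2 * (L : ℝ) - 2)) < y)
    (hz2 : 0 < z2) (hz12 : z2 < z1)
    (h1 : z1 ^ (2 * L - 1) - Real.sqrt lam * y * z1 ^ (L - 1) + lam * z1 = 0)
    (h2 : z2 ^ (2 * L - 1) - Real.sqrt lam * y * z2 ^ (L - 1) + lam * z2 = 0) :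
    (((L : ℝ) - 2) / L) ^ ((1 : ℝ) / (2 * (L : ℝ) - 2))
        * lam ^ ((1 : ℝ) / (2 * (L : ℝ) - 2)) < z1 ∧
      z2 < (((L : ℝ) - 2) / L) ^ ((1 : ℝ) / (2 * (L : ℝ) - 2))
        * lam ^ ((1 : ℝ) / (2 * (L : ℝ) - 2)) :=
  stmt_5_general L hL lam y z1 z2 hlam hz2 hz12 h1 h2
end

section
/- Let L ≥ 3 be an integer, λ > 0, and y* the threshold as above. If y > y', where both y, y' > y*, then the larger positive root of f(x;y) = x^{2L-1} - √λ·y·x^{L-1} + λ·x = 0 is strictly greater than the larger positive root of f(x;y') = 0, and the smaller positive root of f(·;y) is strictly less than the smaller positive root of f(·;y'). -/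
/-!
Dividing by `x ^ (L - 1)`, a positive `x` is a root of `f(·;y)` exactly when
`x ^ L + λ x ^ (2 - L) = √λ y`. The left-hand side is strictly convex on `(0, ∞)`, so every
point where it is below `√λ y` lies strictly between the two points where it equals `√λ y`.
As `√λ y' < √λ y`, both roots for `y'` lie strictly between the two roots for `y`.
-/

open Set

theorem StrictConvexOn.mem_Ioo_of_apply_lt_of_apply_eq {𝕜 β : Type*} [Field 𝕜] [LinearOrder 𝕜]
    [IsStrictOrderedRing 𝕜] [AddCommMonoid β] [LinearOrder β] [IsOrderedAddMonoid β]
    [Module 𝕜 β] [PosSMulStrictMono 𝕜 β] {s : Set 𝕜} {f : 𝕜 → β} (hf : StrictConvexOn 𝕜 s f)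
    {x y z : 𝕜} (hx : x ∈ s) (hy : y ∈ s) (hxy : x < y) (hfxy : f x = f y) (hz : z ∈ s)
    (hfz : f z < f y) : z ∈ Ioo x y := by
  have hzx : z ≠ x := by rintro rfl; exact hfz.ne hfxy
  have hzy : z ≠ y := by rintro rfl; exact hfz.ne rfl
  by_contra hout
  rcases not_and_or.mp hout with hle | hge
  · have hzx' : z < x := lt_of_le_of_ne (not_lt.mp hle) hzx
    have := hf.lt_on_openSegment hz hy (hzx'.trans hxy).ne
      (by rw [openSegment_eq_Ioo (hzx'.trans hxy)]; exact ⟨hzx', hxy⟩)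
    rw [max_eq_right hfz.le, hfxy] at this
    exact this.false
  · have hyz : y < z := lt_of_le_of_ne (not_lt.mp hge) (Ne.symm hzy)
    have := hf.lt_on_openSegment hx hz (hxy.trans hyz).ne
      (by rw [openSegment_eq_Ioo (hxy.trans hyz)]; exact ⟨hxy, hyz⟩)
    rw [max_eq_left (hfz.le.trans_eq hfxy.symm), hfxy] at this
    exact this.false

noncomputable def rootProfile (L : ℕ) (lam x : ℝ) : ℝ := x ^ L + lam * x ^ (2 - (L : ℤ))

theorem strictConvexOn_rootProfile {L : ℕ} (hL : 2 ≤ L) {lam : ℝ} (hlam : 0 ≤ lam) :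
    StrictConvexOn ℝ (Ioi 0) (rootProfile L lam) :=
  ((strictConvexOn_pow hL).subset Ioi_subset_Ici_self (convex_Ioi 0)).add_convexOn
    ((convexOn_zpow _).smul hlam)

theorem rootProfile_eq_iff {L : ℕ} (hL : 2 ≤ L) {lam c x : ℝ} (hx : 0 < x) :
    rootProfile L lam x = c ↔ x ^ (2 * L - 1) - c * x ^ (L - 1) + lam * x = 0 := by
  obtain ⟨m, rfl⟩ : ∃ m, L = m + 2 := ⟨L - 2, by omega⟩
  have hfactor : x ^ (2 * (m + 2) - 1) - c * x ^ (m + 2 - 1) + lam * x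
      = x ^ (m + 1) * (rootProfile (m + 2) lam x - c) := by
    have hexp : (2 : ℤ) - ((m + 2 : ℕ) : ℤ) = -(m : ℤ) := by push_cast; ring
    rw [rootProfile, hexp, zpow_neg, zpow_natCast, show 2 * (m + 2) - 1 = 2 * m + 3 by omega,
      show m + 2 - 1 = m + 1 by omega]
    field_simp
    ring
  rw [hfactor, mul_eq_zero, sub_eq_zero, or_iff_right (pow_ne_zero _ hx.ne')]

theorem stmt_6_general (L : ℕ) (hL : 3 ≤ L) (lam y y' a1 a2 b1 b2 : ℝ) (hlam : 0 < lam)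
    (hyy' : y' < y)
    (ha2 : 0 < a2) (ha12 : a2 < a1)
    (ha1eq : a1 ^ (2 * L - 1) - Real.sqrt lam * y * a1 ^ (L - 1) + lam * a1 = 0)
    (ha2eq : a2 ^ (2 * L - 1) - Real.sqrt lam * y * a2 ^ (L - 1) + lam * a2 = 0)
    (hb2 : 0 < b2) (hb12 : b2 < b1)
    (hb1eq : b1 ^ (2 * L - 1) - Real.sqrt lam * y' * b1 ^ (L - 1) + lam * b1 = 0)
    (hb2eq : b2 ^ (2 * L - 1) - Real.sqrt lam * y' * b2 ^ (L - 1) + lam * b2 = 0) :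
    b1 < a1 ∧ a2 < b2 := by
  have hL2 : 2 ≤ L := by omega
  have ha1 : 0 < a1 := ha2.trans ha12
  have hb1 : 0 < b1 := hb2.trans hb12
  have hlevel : Real.sqrt lam * y' < Real.sqrt lam * y :=
    mul_lt_mul_of_pos_left hyy' (Real.sqrt_pos.mpr hlam)
  have ga1 := (rootProfile_eq_iff hL2 ha1).2 ha1eq
  have ga2 := (rootProfile_eq_iff hL2 ha2).2 ha2eq
  have gb1 := (rootProfile_eq_iff hL2 hb1).2 hb1eq
  have gb2 := (rootProfile_eq_iff hL2 hb2).2 hb2eq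
  have hsqueeze : ∀ z ∈ Ioi (0 : ℝ), rootProfile L lam z < Real.sqrt lam * y → z ∈ Ioo a2 a1 :=
    fun z hz hfz ↦ (strictConvexOn_rootProfile hL2 hlam.le).mem_Ioo_of_apply_lt_of_apply_eq
      ha2 ha1 ha12 (ga2.trans ga1.symm) hz (hfz.trans_eq ga1.symm)
  exact ⟨(hsqueeze b1 hb1 (gb1 ▸ hlevel)).2, (hsqueeze b2 hb2 (gb2 ▸ hlevel)).1⟩

/-- Monotonicity of the two positive roots of `f(x;y) = x^(2L-1) - √λ y x^(L-1) + λ x = 0`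
in `y`: for `y > y' > y*`, the larger root for `y` is strictly greater than the larger root
for `y'`, and the smaller root for `y` is strictly less than the smaller root for `y'`. -/
theorem stmt_6 (L : ℕ) (hL : 3 ≤ L) (lam y y' a1 a2 b1 b2 : ℝ) (hlam : 0 < lam)
    (hy' : ((((L : ℝ) - 2) / L) ^ ((L : ℝ) / (2 * (L : ℝ) - 2))
        + ((L : ℝ) / ((L : ℝ) - 2)) ^ (((L : ℝ) - 2) / (2 * (L : ℝ) - 2)))
        * lam ^ ((1 : ℝ) / (2 * (L : ℝ) - 2)) < y')
    (hyy' : y' < y)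
    (ha2 : 0 < a2) (ha12 : a2 < a1)
    (ha1eq : a1 ^ (2 * L - 1) - Real.sqrt lam * y * a1 ^ (L - 1) + lam * a1 = 0)
    (ha2eq : a2 ^ (2 * L - 1) - Real.sqrt lam * y * a2 ^ (L - 1) + lam * a2 = 0)
    (hb2 : 0 < b2) (hb12 : b2 < b1)
    (hb1eq : b1 ^ (2 * L - 1) - Real.sqrt lam * y' * b1 ^ (L - 1) + lam * b1 = 0)
    (hb2eq : b2 ^ (2 * L - 1) - Real.sqrt lam * y' * b2 ^ (L - 1) + lam * b2 = 0) :
    b1 < a1 ∧ a2 < b2 :=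
  stmt_6_general L hL lam y y' a1 a2 b1 b2 hlam hyy' ha2 ha12 ha1eq ha2eq hb2 hb12 hb1eq hb2eq
end

section
/- Let L ≥ 3 be an integer, λ > 0, y > y* (with y* as above), and let x̄ > 0 be the larger positive root of f(x;y) = x^{2L-1} - √λ·y·x^{L-1} + λ·x = 0 and x̲ > 0 the smaller. Then the x-derivative of f at x̄ is strictly positive: (2L-1)·x̄^{2L-2} - √λ·(L-1)·y·x̄^{L-2} + λ > 0, and at x̲ it is strictly negative: (2L-1)·x̲^{2L-2} - √λ·(L-1)·y·x̲^{L-2} + λ < 0. -/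
/-!
Write `L = n + 2` and `a = √λ·y`. Then `f(x) = x^(n+1)·(h(x) - a)` with
`h(x) = x^(n+2) + λ·x^(-n)`, which is strictly convex on `(0, ∞)`. The two positive roots of `f`
are two solutions of `h = a`, so `h' < 0` at the smaller and `h' > 0` at the larger one, and by the
product rule `f'(x) = x^(n+1)·h'(x)` at a root.
-/

open Set

theorem StrictConvexOn.neg_and_pos_of_hasDerivAt_of_eq {S : Set ℝ} {f : ℝ → ℝ}
    {u v f'u f'v : ℝ} (hf : StrictConvexOn ℝ S f) (hu : u ∈ S) (hv : v ∈ S) (huv : u < v)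
    (heq : f u = f v) (hfu : HasDerivAt f f'u u) (hfv : HasDerivAt f f'v v) :
    f'u < 0 ∧ 0 < f'v := by
  have hslope : slope f u v = 0 := by simp [slope_def_field, heq]
  exact ⟨hslope ▸ hf.lt_slope_of_hasDerivAt hu hv huv hfu,
    hslope ▸ hf.slope_lt_of_hasDerivAt hu hv huv hfv⟩

noncomputable def reducedF (n : ℕ) (lam x : ℝ) : ℝ := x ^ (n + 2) + lam * x ^ (-(n : ℤ))

namespace reducedF

variable (n : ℕ) {lam x : ℝ}

theorem strictConvexOn (hlam : 0 ≤ lam) : StrictConvexOn ℝ (Ioi 0) (reducedF n lam) :=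
  ((strictConvexOn_pow (by omega)).subset Ioi_subset_Ici_self (convex_Ioi 0)).add_convexOn
    ((convexOn_zpow _).smul hlam)

theorem hasDerivAt (hx : x ≠ 0) :
    HasDerivAt (reducedF n lam)
      ((n + 2) * x ^ (n + 1) - n * lam * x ^ (-(n : ℤ) - 1)) x := by
  refine ((hasDerivAt_pow (n + 2) x).add
    ((hasDerivAt_zpow (-(n : ℤ)) x (.inl hx)).const_mul lam)).congr_deriv ?_
  push_cast
  ring

theorem pow_mul_sub_eq (a : ℝ) (hx : x ≠ 0) :
    x ^ (n + 1) * (reducedF n lam x - a) = x ^ (2 * n + 3) - a * x ^ (n + 1) + lam * x := by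
  simp only [reducedF, zpow_neg, zpow_natCast]
  field_simp
  ring

theorem deriv_mul_eq (a : ℝ) (hx : x ≠ 0) :
    (2 * n + 3) * x ^ (2 * n + 2) - a * (n + 1) * x ^ n + lam
      = x ^ (n + 1) * ((n + 2) * x ^ (n + 1) - n * lam * x ^ (-(n : ℤ) - 1))
        + (n + 1) * x ^ n * (reducedF n lam x - a) := by
  simp only [reducedF, zpow_sub₀ hx, zpow_neg, zpow_natCast, zpow_one]
  field_simp
  ring

end reducedF

theorem deriv_neg_and_pos_of_two_roots (n : ℕ) {lam a u v : ℝ} (hlam : 0 ≤ lam) (hu : 0 < u)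
    (huv : u < v) (hfu : u ^ (2 * n + 3) - a * u ^ (n + 1) + lam * u = 0)
    (hfv : v ^ (2 * n + 3) - a * v ^ (n + 1) + lam * v = 0) :
    (2 * n + 3) * u ^ (2 * n + 2) - a * (n + 1) * u ^ n + lam < 0 ∧
      0 < (2 * n + 3) * v ^ (2 * n + 2) - a * (n + 1) * v ^ n + lam := by
  have hv : 0 < v := hu.trans huv
  have hroot {x : ℝ} (hx : 0 < x) (hfx : x ^ (2 * n + 3) - a * x ^ (n + 1) + lam * x = 0) :
      reducedF n lam x = a := by
    rw [← reducedF.pow_mul_sub_eq n a hx.ne'] at hfx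
    exact sub_eq_zero.mp ((mul_eq_zero.mp hfx).resolve_left (pow_ne_zero _ hx.ne'))
  obtain ⟨hderiv_u, hderiv_v⟩ :=
    (reducedF.strictConvexOn n hlam).neg_and_pos_of_hasDerivAt_of_eq hu hv huv
      (by rw [hroot hu hfu, hroot hv hfv]) (reducedF.hasDerivAt n hu.ne')
      (reducedF.hasDerivAt n hv.ne')
  rw [reducedF.deriv_mul_eq n a hu.ne', reducedF.deriv_mul_eq n a hv.ne',
    hroot hu hfu, hroot hv hfv]
  simp only [sub_self, mul_zero, add_zero]
  exact ⟨mul_neg_of_pos_of_neg (pow_pos hu _) hderiv_u, mul_pos (pow_pos hv _) hderiv_v⟩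

theorem stmt_7_general (L : ℕ) (hL : 3 ≤ L) (lam y xbar xund : ℝ) (hlam : 0 < lam)
    (hxu : 0 < xund) (hxx : xund < xbar)
    (h1 : xbar ^ (2 * L - 1) - Real.sqrt lam * y * xbar ^ (L - 1) + lam * xbar = 0)
    (h2 : xund ^ (2 * L - 1) - Real.sqrt lam * y * xund ^ (L - 1) + lam * xund = 0) :
    0 < (2 * (L : ℝ) - 1) * xbar ^ (2 * L - 2)
        - Real.sqrt lam * ((L : ℝ) - 1) * y * xbar ^ (L - 2) + lam ∧
      (2 * (L : ℝ) - 1) * xund ^ (2 * L - 2)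
        - Real.sqrt lam * ((L : ℝ) - 1) * y * xund ^ (L - 2) + lam < 0 := by
  obtain ⟨n, rfl⟩ : ∃ n, L = n + 2 := ⟨L - 2, by omega⟩
  rw [show 2 * (n + 2) - 1 = 2 * n + 3 by omega, show n + 2 - 1 = n + 1 by omega] at h1 h2
  rw [show 2 * (n + 2) - 2 = 2 * n + 2 by omega, show n + 2 - 2 = n by omega]
  obtain ⟨hund, hbar⟩ := deriv_neg_and_pos_of_two_roots n hlam.le hxu hxx h2 h1
  push_cast
  exact ⟨by linarith, by linarith⟩

/-- For `y > y*`, the derivative of `f(·;y)` is strictly positive at the larger positive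
root and strictly negative at the smaller positive root. -/
theorem stmt_7 (L : ℕ) (hL : 3 ≤ L) (lam y xbar xund : ℝ) (hlam : 0 < lam)
    (hy : ((((L : ℝ) - 2) / L) ^ ((L : ℝ) / (2 * (L : ℝ) - 2))
        + ((L : ℝ) / ((L : ℝ) - 2)) ^ (((L : ℝ) - 2) / (2 * (L : ℝ) - 2)))
        * lam ^ ((1 : ℝ) / (2 * (L : ℝ) - 2)) < y)
    (hxu : 0 < xund) (hxx : xund < xbar)
    (h1 : xbar ^ (2 * L - 1) - Real.sqrt lam * y * xbar ^ (L - 1) + lam * xbar = 0)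
    (h2 : xund ^ (2 * L - 1) - Real.sqrt lam * y * xund ^ (L - 1) + lam * xund = 0) :
    0 < (2 * (L : ℝ) - 1) * xbar ^ (2 * L - 2)
        - Real.sqrt lam * ((L : ℝ) - 1) * y * xbar ^ (L - 2) + lam ∧
      (2 * (L : ℝ) - 1) * xund ^ (2 * L - 2)
        - Real.sqrt lam * ((L : ℝ) - 1) * y * xund ^ (L - 2) + lam < 0 :=
  stmt_7_general L hL lam y xbar xund hlam hxu hxx h1 h2
end

section
/- Let L ≥ 3 be an integer, λ > 0, and set x* = ((L-2)/L)^{1/(2L-2)}·λ^{1/(2L-2)}, y* = (((L-2)/L)^{L/(2L-2)} + (L/(L-2))^{(L-2)/(2L-2)})·λ^{1/(2L-2)}. Then the second derivative in x of f(x;y*) = x^{2L-1} - √λ·y*·x^{L-1} + λ·x at x = x* equals 2(L-1)(L-2)·(L/(L-2))^{1/(2L-2)}·λ^{(2L-3)/(2L-2)}, which is strictly positive. -/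
/-- The second `x`-derivative of `f(x;y*)` at `x = x*` equals
`2(L-1)(L-2)(L/(L-2))^(1/(2L-2)) λ^((2L-3)/(2L-2))`, which is strictly positive. -/
theorem stmt_8 (L : ℕ) (hL : 3 ≤ L) (lam : ℝ) (hlam : 0 < lam) :
    let xstar : ℝ := (((L : ℝ) - 2) / L) ^ ((1 : ℝ) / (2 * (L : ℝ) - 2))
        * lam ^ ((1 : ℝ) / (2 * (L : ℝ) - 2))
    let ystar : ℝ := ((((L : ℝ) - 2) / L) ^ ((L : ℝ) / (2 * (L : ℝ) - 2))
        + ((L : ℝ) / ((L : ℝ) - 2)) ^ (((L : ℝ) - 2) / (2 * (L : ℝ) - 2)))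
        * lam ^ ((1 : ℝ) / (2 * (L : ℝ) - 2))
    (2 * (L : ℝ) - 1) * (2 * (L : ℝ) - 2) * xstar ^ (2 * L - 3)
        - Real.sqrt lam * ((L : ℝ) - 1) * ((L : ℝ) - 2) * ystar * xstar ^ (L - 3)
      = 2 * ((L : ℝ) - 1) * ((L : ℝ) - 2)
          * ((L : ℝ) / ((L : ℝ) - 2)) ^ ((1 : ℝ) / (2 * (L : ℝ) - 2))
          * lam ^ ((2 * (L : ℝ) - 3) / (2 * (L : ℝ) - 2)) ∧
      0 < 2 * ((L : ℝ) - 1) * ((L : ℝ) - 2)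
          * ((L : ℝ) / ((L : ℝ) - 2)) ^ ((1 : ℝ) / (2 * (L : ℝ) - 2))
          * lam ^ ((2 * (L : ℝ) - 3) / (2 * (L : ℝ) - 2)) := by
  intro xstar ystar
  obtain ⟨M, rfl⟩ : ∃ M : ℕ, L = M + 3 := ⟨L - 3, by omega⟩
  simp only [xstar, ystar]
  push_cast
  rw [show 2*(M+3)-3 = 2*M+3 from by omega]
  set A : ℝ := ((M:ℝ)+1)/((M:ℝ)+3) with hAdef
  set e : ℝ := 1/(2*(M:ℝ)+4) with hedef
  have hM3 : (0:ℝ) < (M:ℝ)+3 := by positivity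
  have hM1 : (0:ℝ) < (M:ℝ)+1 := by positivity
  have hA : (0:ℝ) < A := by rw [hAdef]; positivity
  have hpow : ∀ (x:ℝ), 0 ≤ x → ∀ n:ℕ, x ^ (e * (n:ℝ)) = (x ^ e) ^ n := by
    intro x hx n
    rw [Real.rpow_mul hx, Real.rpow_natCast]
  rw [show ((M:ℝ)+3-2)/((M:ℝ)+3) = A from by rw [hAdef]; ring]
  rw [show (((M:ℝ)+3)/((M:ℝ)+3-2)) = A⁻¹ from by rw [hAdef, inv_div]; ring]
  rw [show (1:ℝ)/(2*((M:ℝ)+3)-2) = e from by rw [hedef]; ring]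
  rw [show ((M:ℝ)+3)/(2*((M:ℝ)+3)-2) = e*(((M+3:ℕ)):ℝ) from by rw [hedef]; push_cast; ring]
  rw [show ((M:ℝ)+3-2)/(2*((M:ℝ)+3)-2) = e*(((M+1:ℕ)):ℝ) from by rw [hedef]; push_cast; ring]
  rw [show (2*((M:ℝ)+3)-3)/(2*((M:ℝ)+3)-2) = e*(((2*M+3:ℕ)):ℝ) from by rw [hedef]; push_cast; ring]
  rw [Real.inv_rpow hA.le, Real.inv_rpow hA.le]
  rw [hpow A hA.le, hpow A hA.le, hpow lam hlam.le]
  rw [Real.sqrt_eq_rpow, show (1:ℝ)/2 = e*(((M+2:ℕ)):ℝ) from by rw [hedef]; push_cast; field_simp; ring]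
  rw [hpow lam hlam.le]
  set u : ℝ := A ^ e with hudef
  set v : ℝ := lam ^ e with hvdef
  have hu : (0:ℝ) < u := Real.rpow_pos_of_pos hA e
  have hv : (0:ℝ) < v := Real.rpow_pos_of_pos hlam e
  have huA : u ^ (2*M+4) = A := by
    rw [hudef, ← Real.rpow_natCast (A^e), ← Real.rpow_mul hA.le]
    rw [show e * ((2*M+4:ℕ):ℝ) = 1 from by rw [hedef]; push_cast; field_simp]
    exact Real.rpow_one A
  have hiu : u⁻¹ = (((M:ℝ)+3)/((M:ℝ)+1)) * u^(2*M+3) := by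
    have h1 : (((M:ℝ)+3)/((M:ℝ)+1)) * u^(2*M+3) * u = 1 := by
      have h2 : u ^ (2*M+3) * u = u ^ (2*M+4) := by ring
      rw [mul_assoc, h2, huA, hAdef]
      field_simp
    exact (eq_inv_of_mul_eq_one_left h1).symm
  have hiu2 : (u^(M+1))⁻¹ = (((M:ℝ)+3)/((M:ℝ)+1)) * u^(M+3) := by
    have h1 : (((M:ℝ)+3)/((M:ℝ)+1)) * u^(M+3) * u^(M+1) = 1 := by
      have h2 : u ^ (M+3) * u^(M+1) = u ^ (2*M+4) := by ring
      rw [mul_assoc, h2, huA, hAdef]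
      field_simp
    exact (eq_inv_of_mul_eq_one_left h1).symm
  constructor
  · rw [hiu, hiu2]
    field_simp
    ring
  · have hM0 : (0:ℝ) ≤ (M:ℝ) := Nat.cast_nonneg M
    exact mul_pos (mul_pos (mul_pos (by linarith) (by linarith)) (inv_pos.mpr hu))
      (pow_pos hv _)
end

section
/- Let L ≥ 3 be an integer, λ > 0, y > y* (threshold as above), and let x̄ be the larger positive root of x^{2L-1} - √λ·y·x^{L-1} + λ·x = 0. Then x̄ is a local minimizer of g(x) := (x^L - √λ·y)² + λ·L·x² on (0,∞). -/
/-!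
Dividing `f(x) = x^(2L-1) - √λ y x^(L-1) + λ x` by `x^(L-1)` leaves `h(x) - √λ y` with
`h(x) = x^L + λ x^(2-L)`, which is convex on `(0,∞)`. Both positive roots solve `h = √λ y`, so by
convexity `h ≤ √λ y` between them and `h ≥ √λ y` beyond `x̄`. As `g' = 2L x^(L-1) (h - √λ y)`,
`g` decreases on `[xund, x̄]` and increases to the right of `x̄`.
-/

open Set Filter Topology

theorem ConvexOn.isLocalMin_of_hasDerivAt_mul_sub {s : Set ℝ} {g h p : ℝ → ℝ} {a b c : ℝ}
    (hh : ConvexOn ℝ s h) (hs : s ∈ 𝓝 b) (ha : a ∈ s) (hab : a < b) (hha : h a ≤ c)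
    (hhb : h b = c) (hp : ∀ x ∈ s, 0 ≤ p x) (hg : ∀ x ∈ s, HasDerivAt g (p x * (h x - c)) x) :
    IsLocalMin g b := by
  have hb : b ∈ s := mem_of_mem_nhds hs
  refine isLocalMin_of_deriv (hg b hb).continuousAt
    ((eventually_nhdsWithin_of_eventually_nhds hs).mono fun x hx ↦ (hg x hx).differentiableAt)
    ?_ ?_
  · filter_upwards [self_mem_nhdsWithin, nhdsWithin_le_nhds (Ioi_mem_nhds hab)] with x hxb hxa
    have hx : x ∈ segment ℝ a b := segment_eq_Icc hab.le ▸ ⟨le_of_lt hxa, le_of_lt hxb⟩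
    have hxs : x ∈ s := hh.1.segment_subset ha hb hx
    have hhx : h x ≤ c := by simpa [hhb, hha] using hh.le_on_segment ha hb hx
    rw [(hg x hxs).deriv]
    exact mul_nonpos_of_nonneg_of_nonpos (hp x hxs) (sub_nonpos.2 hhx)
  · filter_upwards [self_mem_nhdsWithin, nhdsWithin_le_nhds hs] with x hbx hxs
    have hhx : c ≤ h x := hhb ▸ hh.le_right_of_left_le'' ha hxs hab (le_of_lt hbx) (hhb ▸ hha)
    rw [(hg x hxs).deriv]
    exact mul_nonneg (hp x hxs) (sub_nonneg.2 hhx)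

theorem convexOn_pow_add_mul_zpow (n : ℕ) (m : ℤ) {a : ℝ} (ha : 0 ≤ a) :
    ConvexOn ℝ (Ioi 0) (fun x : ℝ ↦ x ^ n + a * x ^ m) :=
  ((convexOn_pow n).subset Ioi_subset_Ici_self (convex_Ioi 0)).add ((convexOn_zpow m).smul ha)

theorem pow_sub_one_mul_pow_self {M : Type*} [Monoid M] {L : ℕ} (hL : 1 ≤ L) (x : M) :
    x ^ (L - 1) * x ^ L = x ^ (2 * L - 1) := by
  rw [← pow_add]; congr 1; omega

theorem pow_two_mul_sub_one_sub_add_eq {L : ℕ} (hL : 1 ≤ L) (c a : ℝ) {x : ℝ} (hx : x ≠ 0) :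
    x ^ (2 * L - 1) - c * x ^ (L - 1) + a * x =
      x ^ (L - 1) * (x ^ L + a * x ^ ((2 : ℤ) - L) - c) := by
  have hpow := pow_sub_one_mul_pow_self (M := ℝ) hL x
  have hzpow : x ^ (L - 1) * x ^ ((2 : ℤ) - L) = x := by
    rw [← zpow_natCast, ← zpow_add₀ hx, Nat.cast_sub hL]
    simp
  linear_combination (-hpow) - a * hzpow

theorem hasDerivAt_sq_sub_add_mul_sq (L : ℕ) (c a x : ℝ) :
    HasDerivAt (fun x : ℝ ↦ (x ^ L - c) ^ 2 + a * L * x ^ 2)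
      (2 * L * (x ^ (2 * L - 1) - c * x ^ (L - 1) + a * x)) x := by
  refine ((((hasDerivAt_pow L x).sub_const c).pow 2).add
    ((hasDerivAt_pow 2 x).const_mul (a * L))).congr_deriv ?_
  rcases Nat.eq_zero_or_pos L with rfl | hL
  · simp
  have hpow := pow_sub_one_mul_pow_self (M := ℝ) hL x
  simp only [Nat.add_one_sub_one, pow_one]
  linear_combination (2 : ℝ) * L * hpow

theorem stmt_10_general (L : ℕ) (hL : 3 ≤ L) (lam y xbar xund : ℝ) (hlam : 0 < lam)
    (hxu : 0 < xund) (hxx : xund < xbar)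
    (h1 : xbar ^ (2 * L - 1) - Real.sqrt lam * y * xbar ^ (L - 1) + lam * xbar = 0)
    (h2 : xund ^ (2 * L - 1) - Real.sqrt lam * y * xund ^ (L - 1) + lam * xund = 0) :
    IsLocalMinOn (fun x : ℝ => (x ^ L - Real.sqrt lam * y) ^ 2 + lam * L * x ^ 2)
      (Set.Ioi (0 : ℝ)) xbar := by
  have hL1 : 1 ≤ L := by omega
  set c := Real.sqrt lam * y
  set h : ℝ → ℝ := fun x ↦ x ^ L + lam * x ^ ((2 : ℤ) - L)
  have hroot : ∀ x : ℝ, 0 < x → x ^ (2 * L - 1) - c * x ^ (L - 1) + lam * x = 0 → h x = c := by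
    intro x hx hfx
    rw [pow_two_mul_sub_one_sub_add_eq hL1 c lam hx.ne'] at hfx
    exact sub_eq_zero.1 ((mul_eq_zero.1 hfx).resolve_left (pow_ne_zero _ hx.ne'))
  have hxb : 0 < xbar := hxu.trans hxx
  refine IsLocalMin.on ?_ _
  refine (convexOn_pow_add_mul_zpow L _ hlam.le).isLocalMin_of_hasDerivAt_mul_sub
    (p := fun x ↦ 2 * L * x ^ (L - 1)) (Ioi_mem_nhds hxb) hxu hxx
    (hroot xund hxu h2).le (hroot xbar hxb h1) (fun x hx ↦ by have : 0 < x := hx; positivity) ?_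
  intro x hx
  convert hasDerivAt_sq_sub_add_mul_sq L c lam x using 1
  rw [pow_two_mul_sub_one_sub_add_eq hL1 c lam (ne_of_gt hx), mul_assoc]

/-- For `y > y*`, the larger positive root `x̄` of `x^(2L-1) - √λ y x^(L-1) + λ x = 0` is a
local minimizer of `g(x) = (x^L - √λ y)² + λLx²` on `(0,∞)`. -/
theorem stmt_10 (L : ℕ) (hL : 3 ≤ L) (lam y xbar xund : ℝ) (hlam : 0 < lam)
    (hy : ((((L : ℝ) - 2) / L) ^ ((L : ℝ) / (2 * (L : ℝ) - 2))
        + ((L : ℝ) / ((L : ℝ) - 2)) ^ (((L : ℝ) - 2) / (2 * (L : ℝ) - 2)))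
        * lam ^ ((1 : ℝ) / (2 * (L : ℝ) - 2)) < y)
    (hxu : 0 < xund) (hxx : xund < xbar)
    (h1 : xbar ^ (2 * L - 1) - Real.sqrt lam * y * xbar ^ (L - 1) + lam * xbar = 0)
    (h2 : xund ^ (2 * L - 1) - Real.sqrt lam * y * xund ^ (L - 1) + lam * xund = 0) :
    IsLocalMinOn (fun x : ℝ => (x ^ L - Real.sqrt lam * y) ^ 2 + lam * L * x ^ 2)
      (Set.Ioi (0 : ℝ)) xbar :=
  stmt_10_general L hL lam y xbar xund hlam hxu hxx h1 h2
end

section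
/- Let W₁, ..., W_L be a critical point of G(W) = ‖W_L⋯W₁ - √λ·Y‖_F² + λ·∑ ‖W_l‖_F². Then for each l ∈ [L], (W_l W_lᵀ)^{L-1} W_l - √λ·W_{L:l+1}ᵀ Y W_{l-1:1}ᵀ + λ·W_l = 0. -/
open Matrix

/-- `chainProd d W j = W_{j-1} ⋯ W_0` (product of the first `j` layer matrices). -/
noncomputable def chainProd (d : ℕ → ℕ)
    (W : ∀ l : ℕ, Matrix (Fin (d (l + 1))) (Fin (d l)) ℝ) :
    ∀ j : ℕ, Matrix (Fin (d j)) (Fin (d 0)) ℝ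
  | 0 => (1 : Matrix (Fin (d 0)) (Fin (d 0)) ℝ)
  | j + 1 => W j * chainProd d W j

/-- `tchainProd d W s k = W_sᵀ W_{s+1}ᵀ ⋯ W_{s+k-1}ᵀ = (W_{s+k-1} ⋯ W_s)ᵀ`. -/
noncomputable def tchainProd (d : ℕ → ℕ)
    (W : ∀ l : ℕ, Matrix (Fin (d (l + 1))) (Fin (d l)) ℝ) (s : ℕ) :
    ∀ k : ℕ, Matrix (Fin (d s)) (Fin (d (s + k))) ℝ
  | 0 => (1 : Matrix (Fin (d s)) (Fin (d s)) ℝ)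
  | k + 1 => tchainProd d W s k * (W (s + k))ᵀ

section helper

variable (d : ℕ → ℕ) (W : ∀ l : ℕ, Matrix (Fin (d (l + 1))) (Fin (d l)) ℝ)

lemma chain_zero : chainProd d W 0 = 1 := rfl

lemma chain_succ (j : ℕ) : chainProd d W (j + 1) = W j * chainProd d W j := rfl

lemma tchain_zero (s : ℕ) : tchainProd d W s 0 = (1 : Matrix (Fin (d s)) (Fin (d s)) ℝ) := rfl

lemma tchain_succ (s k : ℕ) :
    tchainProd d W s (k + 1) = tchainProd d W s k * (W (s + k))ᵀ := rfl

lemma semiconjPow {a b : ℕ} (A : Matrix (Fin a) (Fin b) ℝ) (j : ℕ) :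
    (A * Aᵀ) ^ j * A = A * (Aᵀ * A) ^ j := by
  induction j with
  | zero => simp
  | succ j ih =>
    rw [pow_succ', Matrix.mul_assoc, ih, Matrix.mul_assoc A Aᵀ,
      ← Matrix.mul_assoc Aᵀ A, ← pow_succ']

lemma sandwichPow {a b : ℕ} (A : Matrix (Fin a) (Fin b) ℝ) (j : ℕ) :
    Aᵀ * ((A * Aᵀ) ^ j * A) = (Aᵀ * A) ^ (j + 1) := by
  rw [semiconjPow, ← Matrix.mul_assoc, ← pow_succ']

lemma castW (a b : ℕ) (hab : b = a) (c : ℕ) (N : Matrix (Fin (d (a + 1))) (Fin c) ℝ)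
    (h1 : d b = d a) (h2 : d (b + 1) = d (a + 1)) :
    ((W a)ᵀ * N).submatrix (Fin.cast h1) id = (W b)ᵀ * N.submatrix (Fin.cast h2) id := by
  subst hab
  rfl

lemma tpeel (s : ℕ) : ∀ (k c : ℕ) (N : Matrix (Fin (d (s + (k + 1)))) (Fin c) ℝ)
    (h : s + 1 + k = s + (k + 1)),
    tchainProd d W s (k + 1) * N
      = (W s)ᵀ * (tchainProd d W (s + 1) k * N.submatrix (Fin.cast (congrArg d h)) id) := by
  intro k
  induction k with
  | zero =>
    intro c N h
    rw [tchain_succ, tchain_zero, tchain_zero, Matrix.one_mul, Matrix.one_mul]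
    rfl
  | succ k ih =>
    intro c N h
    rw [tchain_succ d W s (k + 1), Matrix.mul_assoc,
      ih c _ (by omega),
      tchain_succ d W (s + 1) k,
      Matrix.mul_assoc (tchainProd d W (s + 1) k),
      castW d W (s + (k + 1)) (s + 1 + k) (by omega)]


lemma powA (s : ℕ) : ∀ k : ℕ,
    (∀ i, i < k → W (s + i) * (W (s + i))ᵀ = (W (s + i + 1))ᵀ * W (s + i + 1)) →
    ∀ (j : ℕ) (P : Matrix (Fin (d (s + (k + 1)))) (Fin (d (s + (k + 1)))) ℝ),
    P = (W (s + k) * (W (s + k))ᵀ) ^ j →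
    tchainProd d W s (k + 1) * P * (tchainProd d W s (k + 1))ᵀ
      = ((W s)ᵀ * W s) ^ (k + j + 1) := by
  intro k
  induction k with
  | zero =>
    intro _ j P hP
    subst hP
    rw [tchain_succ, tchain_zero]
    simp only [Matrix.one_mul, Matrix.transpose_transpose]
    rw [Matrix.mul_assoc, sandwichPow]
    simp
  | succ k ih =>
    intro hb j P hP
    subst hP
    have hbk : W (s + k) * (W (s + k))ᵀ = (W (s + k + 1))ᵀ * W (s + k + 1) :=
      hb k (Nat.lt_succ_self k)
    rw [tchain_succ d W s (k + 1)]
    rw [Matrix.transpose_mul (tchainProd d W s (k + 1)), Matrix.transpose_transpose]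
    rw [Matrix.mul_assoc (tchainProd d W s (k + 1))]
    rw [Matrix.mul_assoc (tchainProd d W s (k + 1))]
    rw [← Matrix.mul_assoc _ (W (s + (k + 1))) ((tchainProd d W s (k + 1))ᵀ)]
    rw [Matrix.mul_assoc ((W (s + (k + 1)))ᵀ)]
    rw [sandwichPow (W (s + (k + 1))) j]
    rw [show (W (s + (k + 1)))ᵀ * W (s + (k + 1)) = W (s + k) * (W (s + k))ᵀ from hbk.symm]
    rw [← Matrix.mul_assoc]
    rw [ih (fun i hi => hb i (by omega)) (j + 1) ((W (s + k) * (W (s + k))ᵀ) ^ (j + 1)) rfl]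
    rw [show k + (j + 1) + 1 = k + 1 + j + 1 from by omega]

lemma tchainGram (s k : ℕ)
    (hb : ∀ i, i < k → W (s + i) * (W (s + i))ᵀ = (W (s + i + 1))ᵀ * W (s + i + 1)) :
    tchainProd d W s (k + 1) * (tchainProd d W s (k + 1))ᵀ = ((W s)ᵀ * W s) ^ (k + 1) := by
  have h := powA d W s k hb 0 1 (by rw [pow_zero])
  rw [Matrix.mul_one] at h
  simpa using h

lemma powB : ∀ m : ℕ,
    (∀ i, i < m → W i * (W i)ᵀ = (W (i + 1))ᵀ * W (i + 1)) →
    W m * (chainProd d W m * (chainProd d W m)ᵀ) = (W m * (W m)ᵀ) ^ m * W m := by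
  intro m
  induction m with
  | zero => intro _; rw [chain_zero]; simp
  | succ m ih =>
    intro hb
    rw [chain_succ, Matrix.transpose_mul]
    rw [show W m * chainProd d W m * ((chainProd d W m)ᵀ * (W m)ᵀ)
        = W m * (chainProd d W m * (chainProd d W m)ᵀ) * (W m)ᵀ from by
      rw [Matrix.mul_assoc, Matrix.mul_assoc, Matrix.mul_assoc]]
    rw [ih (fun i hi => hb i (by omega))]
    rw [Matrix.mul_assoc, ← pow_succ]
    rw [show W m * (W m)ᵀ = (W (m + 1))ᵀ * W (m + 1) from hb m (Nat.lt_succ_self m)]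
    rw [semiconjPow]

lemma chainSplit (s : ℕ) : ∀ k : ℕ,
    chainProd d W (s + k) = (tchainProd d W s k)ᵀ * chainProd d W s := by
  intro k
  induction k with
  | zero => rw [tchain_zero]; simp
  | succ k ih =>
    rw [show chainProd d W (s + (k + 1)) = W (s + k) * chainProd d W (s + k) from rfl]
    rw [ih, tchain_succ, Matrix.transpose_mul, Matrix.transpose_transpose, Matrix.mul_assoc]


lemma bal (L : ℕ) (lam : ℝ) (hlam : 0 < lam)
    (Y : Matrix (Fin (d L)) (Fin (d 0)) ℝ)
    (hcrit : ∀ m k : ℕ, ∀ h : L = m + 1 + k,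
      (2 : ℝ) • (tchainProd d W (m + 1) k *
          (Matrix.reindex (finCongr (congrArg d h)) (Equiv.refl (Fin (d 0)))
            (chainProd d W L - Real.sqrt lam • Y)) *
          (chainProd d W m)ᵀ)
        + (2 * lam) • W m = 0)
    (m k : ℕ) (h : L = m + 1 + (k + 1)) :
    W m * (W m)ᵀ = (W (m + 1))ᵀ * W (m + 1) := by
  subst h
  have h1 := hcrit m (k + 1) rfl
  have hk : m + 1 + (k + 1) = m + 1 + 1 + k := by omega
  have h2 := hcrit (m + 1) k hk
  -- abbreviations
  set M : Matrix (Fin (d (m + 1 + (k + 1)))) (Fin (d 0)) ℝ :=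
    chainProd d W (m + 1 + (k + 1)) - Real.sqrt lam • Y with hMdef
  have e1 : tchainProd d W (m + 1) (k + 1) * M * (chainProd d W m)ᵀ + lam • W m = 0 := by
    have h1' : (2 : ℝ) • (tchainProd d W (m + 1) (k + 1) * M * (chainProd d W m)ᵀ
        + lam • W m) = 0 := by
      rw [smul_add, smul_smul]
      exact h1
    exact (smul_eq_zero.mp h1').resolve_left (by norm_num)
  have e2 : tchainProd d W (m + 1 + 1) k *
      (Matrix.reindex (finCongr (congrArg d hk)) (Equiv.refl (Fin (d 0))) M) *
      (chainProd d W (m + 1))ᵀ + lam • W (m + 1) = 0 := by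
    have h2' : (2 : ℝ) • (tchainProd d W (m + 1 + 1) k *
        (Matrix.reindex (finCongr (congrArg d hk)) (Equiv.refl (Fin (d 0))) M) *
        (chainProd d W (m + 1))ᵀ + lam • W (m + 1)) = 0 := by
      rw [smul_add, smul_smul]
      exact h2
    exact (smul_eq_zero.mp h2').resolve_left (by norm_num)
  have eW : lam • W m = -(tchainProd d W (m + 1) (k + 1) * M * (chainProd d W m)ᵀ) :=
    eq_neg_of_add_eq_zero_right e1
  have eW1 : lam • W (m + 1) = -(tchainProd d W (m + 1 + 1) k *
      (Matrix.reindex (finCongr (congrArg d hk)) (Equiv.refl (Fin (d 0))) M) *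
      (chainProd d W (m + 1))ᵀ) :=
    eq_neg_of_add_eq_zero_right e2
  have hpeel := tpeel d W (m + 1) k (d 0) M (by omega)
  have step1 : lam • (W m * (W m)ᵀ)
      = -(tchainProd d W (m + 1) (k + 1) * M * (chainProd d W (m + 1))ᵀ) := by
    rw [← Matrix.smul_mul, eW, Matrix.neg_mul]
    congr 1
    rw [Matrix.mul_assoc (tchainProd d W (m + 1) (k + 1) * M), ← Matrix.transpose_mul,
      ← chain_succ]
  rw [hpeel] at step1
  have step2 : lam • ((W (m + 1))ᵀ * W (m + 1))
      = -((W (m + 1))ᵀ * (tchainProd d W (m + 1 + 1) k *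
        (Matrix.reindex (finCongr (congrArg d hk)) (Equiv.refl (Fin (d 0))) M) *
        (chainProd d W (m + 1))ᵀ)) := by
    rw [← Matrix.mul_smul, eW1, Matrix.mul_neg]
  have key : lam • (W m * (W m)ᵀ) = lam • ((W (m + 1))ᵀ * W (m + 1)) := by
    rw [step1, step2, Matrix.mul_assoc]
    rfl
  exact smul_right_injective _ (ne_of_gt hlam) key

end helper

/-- At a critical point of `G(W) = ‖W_{L-1}⋯W_0 - √λ Y‖_F² + λ ∑ ‖W_l‖_F²`, each layer
satisfies `(W_l W_lᵀ)^(L-1) W_l - √λ W_{L:l+1}ᵀ Y W_{l-1:1}ᵀ + λ W_l = 0`. -/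
theorem stmt_13 (L : ℕ) (hL : 2 ≤ L) (d : ℕ → ℕ) (lam : ℝ) (hlam : 0 < lam)
    (Y : Matrix (Fin (d L)) (Fin (d 0)) ℝ)
    (W : ∀ l : ℕ, Matrix (Fin (d (l + 1))) (Fin (d l)) ℝ)
    (hcrit : ∀ m k : ℕ, ∀ h : L = m + 1 + k,
      (2 : ℝ) • (tchainProd d W (m + 1) k *
          (Matrix.reindex (finCongr (congrArg d h)) (Equiv.refl (Fin (d 0)))
            (chainProd d W L - Real.sqrt lam • Y)) *
          (chainProd d W m)ᵀ)
        + (2 * lam) • W m = 0) :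
    ∀ m k : ℕ, ∀ h : L = m + 1 + k,
      (W m * (W m)ᵀ) ^ (L - 1) * W m
        - Real.sqrt lam • (tchainProd d W (m + 1) k *
            (Matrix.reindex (finCongr (congrArg d h)) (Equiv.refl (Fin (d 0))) Y) *
            (chainProd d W m)ᵀ)
        + lam • W m = 0 := by
  intro m k h
  subst h
  have hbal : ∀ i, i + 1 < m + 1 + k → W i * (W i)ᵀ = (W (i + 1))ᵀ * W (i + 1) := by
    intro i hi
    exact bal d W (m + 1 + k) lam hlam Y hcrit i (m + 1 + k - i - 2) (by omega)
  have hre : ∀ (A : Matrix (Fin (d (m + 1 + k))) (Fin (d 0)) ℝ),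
      Matrix.reindex (finCongr (congrArg d (rfl : m + 1 + k = m + 1 + k)))
        (Equiv.refl (Fin (d 0))) A = A := fun A => rfl
  have h1 := hcrit m k rfl
  rw [hre] at h1
  rw [hre]
  have e1 : tchainProd d W (m + 1) k * (chainProd d W (m + 1 + k) - Real.sqrt lam • Y) *
      (chainProd d W m)ᵀ + lam • W m = 0 := by
    have h1' : (2 : ℝ) • (tchainProd d W (m + 1) k *
        (chainProd d W (m + 1 + k) - Real.sqrt lam • Y) *
        (chainProd d W m)ᵀ + lam • W m) = 0 := by
      rw [smul_add, smul_smul]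
      exact h1
    exact (smul_eq_zero.mp h1').resolve_left (by norm_num)
  rw [Matrix.mul_sub, Matrix.mul_smul, Matrix.sub_mul, Matrix.smul_mul] at e1
  have hT : tchainProd d W (m + 1) k * (tchainProd d W (m + 1) k)ᵀ
      = (W m * (W m)ᵀ) ^ k := by
    cases k with
    | zero => rw [tchain_zero]; simp
    | succ k' =>
      rw [tchainGram d W (m + 1) k' (fun i hi => hbal (m + 1 + i) (by omega)),
        ← hbal m (by omega)]
  have key : tchainProd d W (m + 1) k * chainProd d W (m + 1 + k) * (chainProd d W m)ᵀ
      = (W m * (W m)ᵀ) ^ (m + k) * W m := by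
    rw [chainSplit d W (m + 1) k, ← Matrix.mul_assoc, hT, chain_succ,
      Matrix.mul_assoc, Matrix.mul_assoc,
      powB d W m (fun i hi => hbal i (by omega)),
      ← Matrix.mul_assoc, ← pow_add, show k + m = m + k from by omega]
  rw [key] at e1
  rw [show m + 1 + k - 1 = m + k from by omega]
  exact e1
end

section
/- Suppose W_l W_lᵀ = W_{l+1}ᵀ W_{l+1} for l = 1,...,L-1, where W_l ∈ ℝ^{d_l × d_{l-1}}. Then ‖W_L W_{L-1} ⋯ W₁‖ = ‖W₁‖^L, where ‖·‖ denotes the spectral norm. More generally, the i-th singular value of the product W_L⋯W₁ equals the L-th power of the i-th singular value of W₁, for all i ≤ min{d₀,...,d_L}. -/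
open Matrix

/-- The `i`-th largest singular value (0-indexed) of a real matrix `A`: the `i`-th entry of
the decreasingly sorted list of square roots of the roots (with multiplicity) of the
characteristic polynomial of `A Aᵀ`, with default value `0` beyond the list length. -/
noncomputable def ithSV {m n : ℕ} (A : Matrix (Fin m) (Fin n) ℝ) (i : ℕ) : ℝ :=
  (((A * Aᵀ).charpoly.roots.map Real.sqrt).sort (· ≥ ·)).getD i 0

/-! Balancedness telescopes: writing `P_j = W_{j-1} ⋯ W_0`,
`P_{k+1} P_{k+1}ᵀ = W_k (P_k P_kᵀ) W_kᵀ = W_k (W_kᵀ W_k)^k W_kᵀ = (W_k W_kᵀ)^(k+1)`,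
so by the spectral theorem the squared singular values of `P_L` are the `L`-th powers of those of
`W_{L-1}`. Moreover `W_l W_lᵀ = W_{l+1}ᵀ W_{l+1}` has the same nonzero eigenvalues as
`W_{l+1} W_{l+1}ᵀ`, so all layers have the same singular values up to extra zeros, and zeros
appended to a decreasingly sorted list of nonnegative reals read with default `0` are invisible. -/

open Polynomial

theorem Real.sqrt_pow {x : ℝ} (hx : 0 ≤ x) (k : ℕ) : √(x ^ k) = √x ^ k := by
  rw [Real.sqrt_eq_iff_eq_sq (pow_nonneg hx k) (pow_nonneg (Real.sqrt_nonneg x) k), ← pow_mul,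
    mul_comm, pow_mul, Real.sq_sqrt hx]

theorem Real.nonneg_of_mem_map_sqrt {s : Multiset ℝ} : ∀ x ∈ s.map Real.sqrt, 0 ≤ x :=
  Multiset.forall_mem_map_iff.2 fun y _ => Real.sqrt_nonneg y

namespace Multiset

variable {α : Type*} [LinearOrder α]

theorem sort_add_replicate_of_le (s : Multiset α) {a : α} (ha : ∀ x ∈ s, a ≤ x) (k : ℕ) :
    (s + replicate k a).sort (· ≥ ·) = s.sort (· ≥ ·) ++ List.replicate k a := by
  refine List.Perm.eq_of_pairwise' (pairwise_sort _ _) ?_ ?_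
  · rw [List.pairwise_append]
    refine ⟨pairwise_sort _ _, List.pairwise_replicate.2 (Or.inr le_rfl), ?_⟩
    intro x hx y hy
    rw [List.eq_of_mem_replicate hy]
    exact ha x ((mem_sort _).1 hx)
  · rw [← coe_eq_coe, sort_eq, ← coe_add, sort_eq, coe_replicate]

theorem getD_sort_add_replicate_of_le (s : Multiset α) {a : α} (ha : ∀ x ∈ s, a ≤ x)
    (k i : ℕ) :
    ((s + replicate k a).sort (· ≥ ·)).getD i a = (s.sort (· ≥ ·)).getD i a := by
  rw [sort_add_replicate_of_le s ha]
  rcases lt_or_ge i (s.sort (· ≥ ·)).length with hi | hi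
  · exact List.getD_append _ _ _ _ hi
  · rw [List.getD_append_right _ _ _ _ hi, List.getD_eq_default _ _ hi]
    simp

theorem getD_sort_map_of_strictMonoOn (s : Multiset α) {f : α → α} {a : α}
    (hf : StrictMonoOn f {x | a ≤ x}) (ha : ∀ x ∈ s, a ≤ x) (hfa : f a = a) (i : ℕ) :
    ((s.map f).sort (· ≥ ·)).getD i a = f ((s.sort (· ≥ ·)).getD i a) := by
  rw [← map_sort (r := (· ≥ ·)) (r' := (· ≥ ·)) f s
    fun x hx y hy => (hf.le_iff_le (ha y hy) (ha x hx)).symm]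
  conv_lhs => rw [← hfa]
  exact List.getD_map _ _ _

end Multiset

namespace Polynomial

theorem roots_prod_X_sub_C_comp {R ι : Type*} [CommRing R] [IsDomain R] (s : Finset ι)
    (f : ι → R) : (∏ i ∈ s, (X - C (f i))).roots = s.val.map f := by
  rw [← roots_multiset_prod_X_sub_C (s.val.map f), Multiset.map_map]
  rfl

end Polynomial

namespace Matrix.IsHermitian

variable {𝕜 n : Type*} [RCLike 𝕜] [Fintype n] [DecidableEq n] {A : Matrix n n 𝕜}

theorem charpoly_pow (hA : A.IsHermitian) (k : ℕ) :
    (A ^ k).charpoly = ∏ i, (X - C ((hA.eigenvalues i : 𝕜) ^ k)) := by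
  conv_lhs => rw [hA.spectral_theorem, ← map_pow, Unitary.conjStarAlgAut_apply, charpoly_mul_comm,
    ← mul_assoc]
  simp [charpoly_diagonal, diagonal_pow]

end Matrix.IsHermitian

namespace Matrix

variable {R : Type*} [CommRing R] {m n : Type*} [Fintype m] [Fintype n] [DecidableEq m]

theorem pow_mul_mul_eq_mul_mul_pow [DecidableEq n] (A : Matrix m n R) (B : Matrix n m R)
    (t : ℕ) :
    (A * B) ^ t * A = A * (B * A) ^ t := by
  induction t with
  | zero => simp
  | succ t ih => rw [pow_succ, Matrix.mul_assoc, Matrix.mul_assoc A B A, ← Matrix.mul_assoc, ih,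
      Matrix.mul_assoc, ← pow_succ]

theorem roots_charpoly_mul_comm' [DecidableEq n] [IsDomain R] (A : Matrix m n R)
    (B : Matrix n m R) :
    Multiset.replicate (Fintype.card n) 0 + (A * B).charpoly.roots =
      Multiset.replicate (Fintype.card m) 0 + (B * A).charpoly.roots := by
  have h := congrArg roots (charpoly_mul_comm' A B)
  rwa [roots_mul (mul_ne_zero (pow_ne_zero _ X_ne_zero) (charpoly_monic _).ne_zero),
    roots_mul (mul_ne_zero (pow_ne_zero _ X_ne_zero) (charpoly_monic _).ne_zero),
    roots_X_pow, roots_X_pow, Multiset.nsmul_singleton, Multiset.nsmul_singleton] at h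

theorem IsHermitian.roots_charpoly_pow [DecidableEq n] {A : Matrix n n ℝ} (hA : A.IsHermitian)
    (k : ℕ) :
    (A ^ k).charpoly.roots = A.charpoly.roots.map (· ^ k) := by
  rw [hA.charpoly_pow, hA.roots_charpoly_eq_eigenvalues, Polynomial.roots_prod_X_sub_C_comp,
    Multiset.map_map]
  rfl

omit [Fintype m] [DecidableEq m] in
theorem isHermitian_mul_transpose_self (A : Matrix m n ℝ) : (A * Aᵀ).IsHermitian := by
  simpa using isHermitian_mul_conjTranspose_self A

theorem nonneg_of_mem_roots_charpoly_mul_transpose (A : Matrix m n ℝ) {x : ℝ}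
    (hx : x ∈ (A * Aᵀ).charpoly.roots) : 0 ≤ x := by
  have hpsd := posSemidef_self_mul_conjTranspose A
  rw [conjTranspose_eq_transpose_of_trivial] at hpsd
  rw [hpsd.isHermitian.roots_charpoly_eq_eigenvalues] at hx
  obtain ⟨i, -, rfl⟩ := Multiset.mem_map.1 hx
  exact hpsd.eigenvalues_nonneg i

end Matrix

section SingularValues

variable {m n : ℕ}

theorem ithSV_transpose (A : Matrix (Fin m) (Fin n) ℝ) (i : ℕ) : ithSV Aᵀ i = ithSV A i := by
  have hroots := congrArg (Multiset.map Real.sqrt) (roots_charpoly_mul_comm' A Aᵀ)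
  rw [Multiset.map_add, Multiset.map_add, Multiset.map_replicate, Multiset.map_replicate,
    Real.sqrt_zero, Fintype.card_fin, Fintype.card_fin] at hroots
  unfold ithSV
  rw [transpose_transpose,
    ← Multiset.getD_sort_add_replicate_of_le _ Real.nonneg_of_mem_map_sqrt m,
    add_comm, ← hroots, add_comm,
    Multiset.getD_sort_add_replicate_of_le _ Real.nonneg_of_mem_map_sqrt n]

theorem ithSV_eq_pow_of_mul_transpose_eq_pow {q k : ℕ} {P : Matrix (Fin m) (Fin q) ℝ}
    {A : Matrix (Fin m) (Fin n) ℝ} (hk : k ≠ 0) (h : P * Pᵀ = (A * Aᵀ) ^ k) (i : ℕ) :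
    ithSV P i = ithSV A i ^ k := by
  have hroots : (P * Pᵀ).charpoly.roots.map Real.sqrt =
      ((A * Aᵀ).charpoly.roots.map Real.sqrt).map (· ^ k) := by
    rw [h, (isHermitian_mul_transpose_self A).roots_charpoly_pow, Multiset.map_map,
      Multiset.map_map]
    exact Multiset.map_congr rfl fun x hx =>
      Real.sqrt_pow (nonneg_of_mem_roots_charpoly_mul_transpose A hx) k
  rw [ithSV, hroots, Multiset.getD_sort_map_of_strictMonoOn _ (pow_left_strictMonoOn₀ hk)
    Real.nonneg_of_mem_map_sqrt (zero_pow hk)]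
  rfl

end SingularValues

section Balanced

variable (d : ℕ → ℕ) (W : ∀ l : ℕ, Matrix (Fin (d (l + 1))) (Fin (d l)) ℝ) (k : ℕ)

theorem chainProd_succ_mul_transpose
    (hbal : ∀ l < k, W l * (W l)ᵀ = (W (l + 1))ᵀ * W (l + 1)) :
    chainProd d W (k + 1) * (chainProd d W (k + 1))ᵀ = (W k * (W k)ᵀ) ^ (k + 1) := by
  induction k with
  | zero => simp [chainProd]
  | succ k ih =>
    calc chainProd d W (k + 2) * (chainProd d W (k + 2))ᵀ
        = W (k + 1) * (chainProd d W (k + 1) * (chainProd d W (k + 1))ᵀ) * (W (k + 1))ᵀ := by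
          simp only [chainProd, transpose_mul, Matrix.mul_assoc]
      _ = W (k + 1) * ((W (k + 1))ᵀ * W (k + 1)) ^ (k + 1) * (W (k + 1))ᵀ := by
          rw [ih fun l hl => hbal l (by omega), hbal k k.lt_succ_self]
      _ = (W (k + 1) * (W (k + 1))ᵀ) ^ (k + 2) := by
          rw [← pow_mul_mul_eq_mul_mul_pow, Matrix.mul_assoc, ← pow_succ]

theorem ithSV_eq_of_balanced (hbal : ∀ l < k, W l * (W l)ᵀ = (W (l + 1))ᵀ * W (l + 1))
    (i : ℕ) : ithSV (W k) i = ithSV (W 0) i := by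
  induction k with
  | zero => rfl
  | succ k ih =>
    have hstep : ithSV (W (k + 1))ᵀ i = ithSV (W k) i := by
      simp only [ithSV, transpose_transpose, hbal k k.lt_succ_self]
    rw [← ithSV_transpose, hstep, ih fun l hl => hbal l (by omega)]

end Balanced

/-- Under the balancedness condition `W_l W_lᵀ = W_{l+1}ᵀ W_{l+1}`, the spectral norm
(largest singular value) of the product `W_{L-1} ⋯ W_0` equals `‖W_0‖^L`, and more
generally the `i`-th singular value of the product equals the `L`-th power of the `i`-th
singular value of `W_0`, for all `i < min {d 0, …, d L}`. -/
theorem stmt_15 (L : ℕ) (hL : 2 ≤ L) (d : ℕ → ℕ)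
    (W : ∀ l : ℕ, Matrix (Fin (d (l + 1))) (Fin (d l)) ℝ)
    (hbal : ∀ l : ℕ, l + 1 < L → W l * (W l)ᵀ = (W (l + 1))ᵀ * W (l + 1)) :
    ithSV (chainProd d W L) 0 = ithSV (W 0) 0 ^ L ∧
      ∀ i : ℕ, (∀ l : ℕ, l ≤ L → i < d l) →
        ithSV (chainProd d W L) i = ithSV (W 0) i ^ L := by
  obtain ⟨k, rfl⟩ : ∃ k, L = k + 1 := ⟨L - 1, by omega⟩
  have hbal' : ∀ l < k, W l * (W l)ᵀ = (W (l + 1))ᵀ * W (l + 1) :=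
    fun l hl => hbal l (by omega)
  have hsv (i : ℕ) : ithSV (chainProd d W (k + 1)) i = ithSV (W 0) i ^ (k + 1) := by
    rw [ithSV_eq_pow_of_mul_transpose_eq_pow k.succ_ne_zero
      (chainProd_succ_mul_transpose d W k hbal'), ithSV_eq_of_balanced d W k hbal']
  exact ⟨hsv 0, fun i _ => hsv i⟩
end

section
/- Let φ : ℝ^{d₁×d₀} × ⋯ × ℝ^{d_L×d_{L-1}} → ℝ^{d₁×d₀} × ⋯ × ℝ^{d_L×d_{L-1}} be the scaling map φ(W₁,...,W_L) = (√λ₁ W₁, ..., √λ_L W_L) with λ_l > 0 for all l, and set λ = ∏ λ_l. Define F(W) = ‖W_L⋯W₁ - Y‖_F² + ∑ λ_l‖W_l‖_F² and G(V) = ‖V_L⋯V₁ - √λ Y‖_F² + λ∑‖V_l‖_F². Then (W₁,...,W_L) is a critical point of F if and only if φ(W₁,...,W_L) is a critical point of G. -/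
open Matrix

lemma sqrt_prod_aux (n : ℕ) (f : ℕ → ℝ) (hf : ∀ l, 0 ≤ f l) :
    Real.sqrt (∏ l ∈ Finset.range n, f l) = ∏ l ∈ Finset.range n, Real.sqrt (f l) := by
  induction n with
  | zero => simp
  | succ n ih =>
    rw [Finset.prod_range_succ, Finset.prod_range_succ,
      Real.sqrt_mul (Finset.prod_nonneg fun i _ => hf i), ih]

lemma chain_smul_aux (d : ℕ → ℕ) (W : ∀ l : ℕ, Matrix (Fin (d (l + 1))) (Fin (d l)) ℝ)
    (c : ℕ → ℝ) (j : ℕ) :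
    chainProd d (fun l => c l • W l) j
      = (∏ l ∈ Finset.range j, c l) • chainProd d W j := by
  induction j with
  | zero => simp [chainProd]
  | succ j ih =>
    rw [chainProd, chainProd, ih, Finset.prod_range_succ,
      Matrix.smul_mul, Matrix.mul_smul, smul_smul, mul_comm]

lemma tchain_smul_aux (d : ℕ → ℕ) (W : ∀ l : ℕ, Matrix (Fin (d (l + 1))) (Fin (d l)) ℝ)
    (c : ℕ → ℝ) (s k : ℕ) :
    tchainProd d (fun l => c l • W l) s k
      = (∏ l ∈ Finset.range k, c (s + l)) • tchainProd d W s k := by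
  induction k with
  | zero => simp [tchainProd]
  | succ k ih =>
    rw [tchainProd, tchainProd, ih, Finset.prod_range_succ,
      Matrix.transpose_smul, Matrix.mul_smul, Matrix.smul_mul, smul_smul, mul_comm]

/-- `W` is a critical point of `F(W) = ‖W_{L-1}⋯W_0 - Y‖_F² + ∑ λ_l ‖W_l‖_F²` (all partial
gradients `2 W_{L:l+1}ᵀ(W_{L:1} - Y)W_{l-1:1}ᵀ + 2 λ_l W_l` vanish) if and only if the
scaled point `φ(W) = (√λ_0 W_0, …, √λ_{L-1} W_{L-1})` is a critical point of
`G(V) = ‖V_{L-1}⋯V_0 - √λ Y‖_F² + λ ∑ ‖V_l‖_F²` with `λ = ∏ λ_l`. -/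
theorem stmt_16 (L : ℕ) (hL : 2 ≤ L) (d : ℕ → ℕ) (lam : ℕ → ℝ)
    (hlam : ∀ l : ℕ, 0 < lam l)
    (Y : Matrix (Fin (d L)) (Fin (d 0)) ℝ)
    (W : ∀ l : ℕ, Matrix (Fin (d (l + 1))) (Fin (d l)) ℝ) :
    (∀ m k : ℕ, ∀ h : L = m + 1 + k,
      (2 : ℝ) • (tchainProd d W (m + 1) k *
          (Matrix.reindex (finCongr (congrArg d h)) (Equiv.refl (Fin (d 0)))
            (chainProd d W L - Y)) *
          (chainProd d W m)ᵀ)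
        + (2 * lam m) • W m = 0)
    ↔ (∀ m k : ℕ, ∀ h : L = m + 1 + k,
      (2 : ℝ) • (tchainProd d (fun l => Real.sqrt (lam l) • W l) (m + 1) k *
          (Matrix.reindex (finCongr (congrArg d h)) (Equiv.refl (Fin (d 0)))
            (chainProd d (fun l => Real.sqrt (lam l) • W l) L
              - Real.sqrt (∏ l ∈ Finset.range L, lam l) • Y)) *
          (chainProd d (fun l => Real.sqrt (lam l) • W l) m)ᵀ)
        + (2 * ∏ l ∈ Finset.range L, lam l) • (Real.sqrt (lam m) • W m) = 0) := by
  have hΛpos : 0 < ∏ l ∈ Finset.range L, lam l :=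
    Finset.prod_pos fun i _ => hlam i
  have key : ∀ m k : ℕ, ∀ h : L = m + 1 + k,
      (2 : ℝ) • (tchainProd d (fun l => Real.sqrt (lam l) • W l) (m + 1) k *
          (Matrix.reindex (finCongr (congrArg d h)) (Equiv.refl (Fin (d 0)))
            (chainProd d (fun l => Real.sqrt (lam l) • W l) L
              - Real.sqrt (∏ l ∈ Finset.range L, lam l) • Y)) *
          (chainProd d (fun l => Real.sqrt (lam l) • W l) m)ᵀ)
        + (2 * ∏ l ∈ Finset.range L, lam l) • (Real.sqrt (lam m) • W m)
      = ((∏ l ∈ Finset.range L, lam l) / Real.sqrt (lam m)) •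
        ((2 : ℝ) • (tchainProd d W (m + 1) k *
          (Matrix.reindex (finCongr (congrArg d h)) (Equiv.refl (Fin (d 0)))
            (chainProd d W L - Y)) *
          (chainProd d W m)ᵀ)
        + (2 * lam m) • W m) := by
    intro m k h
    subst h
    set a : ℝ := ∏ l ∈ Finset.range k, Real.sqrt (lam (m + 1 + l)) with ha
    set c : ℝ := ∏ l ∈ Finset.range m, Real.sqrt (lam l) with hc
    have hsq : Real.sqrt (∏ l ∈ Finset.range (m + 1 + k), lam l)
        = c * Real.sqrt (lam m) * a := by
      rw [sqrt_prod_aux _ _ fun l => (hlam l).le, Finset.prod_range_add,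
        Finset.prod_range_succ]
    have hsm : Real.sqrt (lam m) ≠ 0 := (Real.sqrt_pos.mpr (hlam m)).ne'
    have hΛ : (∏ l ∈ Finset.range (m + 1 + k), lam l)
        = (c * Real.sqrt (lam m) * a) * (c * Real.sqrt (lam m) * a) := by
      rw [← hsq, Real.mul_self_sqrt hΛpos.le]
    rw [chain_smul_aux, chain_smul_aux, tchain_smul_aux, hsq]
    rw [show (∏ l ∈ Finset.range (m + 1 + k), Real.sqrt (lam l))
        = c * Real.sqrt (lam m) * a by
      rw [Finset.prod_range_add, Finset.prod_range_succ]]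
    rw [← smul_sub]
    have hre : ∀ (M : Matrix (Fin (d (m + 1 + k))) (Fin (d 0)) ℝ) (r : ℝ),
        Matrix.reindex (finCongr (congrArg d (rfl : m + 1 + k = m + 1 + k)))
          (Equiv.refl (Fin (d 0))) (r • M)
        = r • Matrix.reindex (finCongr (congrArg d (rfl : m + 1 + k = m + 1 + k)))
          (Equiv.refl (Fin (d 0))) M := by
      intro M r
      ext i j
      simp
    rw [hre]
    simp only [Matrix.smul_mul, Matrix.mul_smul, Matrix.transpose_smul, smul_smul,
      smul_add]
    congr 1
    · congr 1
      rw [div_mul_eq_mul_div, eq_div_iff hsm, hΛ]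
      ring
    · congr 1
      rw [div_mul_eq_mul_div, eq_div_iff hsm]
      linear_combination (2 * ∏ l ∈ Finset.range (m + 1 + k), lam l) *
        Real.mul_self_sqrt (hlam m).le
  constructor
  · intro H m k h
    rw [key m k h, H m k h, smul_zero]
  · intro H m k h
    have h2 := key m k h
    rw [H m k h] at h2
    rcases smul_eq_zero.mp h2.symm with h3 | h3
    · exact absurd h3 (div_pos hΛpos (Real.sqrt_pos.mpr (hlam m))).ne'
    · exact h3
end

section
/- Let L ≥ 3, λ > 0, and let σ > 0 satisfy L·σ^{2L-2} = λ(L-2) (so σ is the double-root value x*). Define g(x) = (x^L - √λ·y)² + λLx² with y such that σ^L - √λ·y + λσ^{2-L} = 0. Then for τ with |τ/σ^L| ≤ 1/2, g((σ^L + τ)^{1/L}) - g(σ) ≥ -(16(L-2)(L-1)λ)/(3L²·σ^{3L-2})·|τ|³; in particular the second-order term in τ vanishes. -/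
/-!
Write `τ = σ ^ L * u`. Then `(σ ^ L + τ) ^ (1/L) = σ (1 + u) ^ (1/L)` and
`√λ y = σ ^ L + λ σ² / σ ^ L`, so the difference of the two values of `g` is
`λ L σ² ((1 + u) ^ (2/L) - 1)` plus a quadratic polynomial in `u`. Expanding `(1 + u) ^ (2/L)` to
third order, the linear terms cancel identically and the double-root condition
`λ (L - 2) σ² = L σ ^ (2L)` cancels the quadratic ones, leaving the cubic remainder. The
third-order bound on `(1 + u) ^ α` comes from the sign of the third derivative
`α (α - 1) (α - 2) (1 + u) ^ (α - 3)`, which is positive and at most `8 α (α - 1) (α - 2)` for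
`u ≥ -1/2`.
-/

open Set

section Monotone

variable {f f' : ℝ → ℝ} {a b : ℝ}

lemma monotoneOn_Icc_of_hasDerivAt (hf : ∀ x ∈ Icc a b, HasDerivAt f (f' x) x)
    (hf' : ∀ x ∈ Icc a b, 0 ≤ f' x) : MonotoneOn f (Icc a b) :=
  monotoneOn_of_hasDerivWithinAt_nonneg (convex_Icc a b)
    (fun x hx => (hf x hx).continuousAt.continuousWithinAt)
    (fun x hx => (hf x (interior_subset hx)).hasDerivWithinAt)
    (fun x hx => hf' x (interior_subset hx))

lemma antitoneOn_Icc_of_hasDerivAt (hf : ∀ x ∈ Icc a b, HasDerivAt f (f' x) x)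
    (hf' : ∀ x ∈ Icc a b, f' x ≤ 0) : AntitoneOn f (Icc a b) :=
  antitoneOn_of_hasDerivWithinAt_nonpos (convex_Icc a b)
    (fun x hx => (hf x hx).continuousAt.continuousWithinAt)
    (fun x hx => (hf x (interior_subset hx)).hasDerivWithinAt)
    (fun x hx => hf' x (interior_subset hx))

end Monotone

section ThirdOrder

variable {f f₁ f₂ f₃ : ℝ → ℝ}

lemma nonneg_of_third_deriv_nonneg {b : ℝ} (hb : 0 ≤ b)
    (hf : ∀ x ∈ Icc 0 b, HasDerivAt f (f₁ x) x) (hf₁ : ∀ x ∈ Icc 0 b, HasDerivAt f₁ (f₂ x) x)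
    (hf₂ : ∀ x ∈ Icc 0 b, HasDerivAt f₂ (f₃ x) x) (h₀ : f 0 = 0) (h₁ : f₁ 0 = 0) (h₂ : f₂ 0 = 0)
    (hf₃ : ∀ x ∈ Icc 0 b, 0 ≤ f₃ x) : 0 ≤ f b := by
  have h0 : (0 : ℝ) ∈ Icc 0 b := left_mem_Icc.2 hb
  have hf₂_nonneg : ∀ x ∈ Icc 0 b, 0 ≤ f₂ x := fun x hx =>
    h₂ ▸ monotoneOn_Icc_of_hasDerivAt hf₂ hf₃ h0 hx hx.1
  have hf₁_nonneg : ∀ x ∈ Icc 0 b, 0 ≤ f₁ x := fun x hx =>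
    h₁ ▸ monotoneOn_Icc_of_hasDerivAt hf₁ hf₂_nonneg h0 hx hx.1
  exact h₀ ▸ monotoneOn_Icc_of_hasDerivAt hf hf₁_nonneg h0 (right_mem_Icc.2 hb) hb

lemma nonneg_of_third_deriv_nonpos {a : ℝ} (ha : a ≤ 0)
    (hf : ∀ x ∈ Icc a 0, HasDerivAt f (f₁ x) x) (hf₁ : ∀ x ∈ Icc a 0, HasDerivAt f₁ (f₂ x) x)
    (hf₂ : ∀ x ∈ Icc a 0, HasDerivAt f₂ (f₃ x) x) (h₀ : f 0 = 0) (h₁ : f₁ 0 = 0) (h₂ : f₂ 0 = 0)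
    (hf₃ : ∀ x ∈ Icc a 0, f₃ x ≤ 0) : 0 ≤ f a := by
  have h0 : (0 : ℝ) ∈ Icc a 0 := right_mem_Icc.2 ha
  have hf₂_nonneg : ∀ x ∈ Icc a 0, 0 ≤ f₂ x := fun x hx =>
    h₂ ▸ antitoneOn_Icc_of_hasDerivAt hf₂ hf₃ hx h0 hx.2
  have hf₁_nonpos : ∀ x ∈ Icc a 0, f₁ x ≤ 0 := fun x hx =>
    h₁ ▸ monotoneOn_Icc_of_hasDerivAt hf₁ hf₂_nonneg hx h0 hx.2
  exact h₀ ▸ antitoneOn_Icc_of_hasDerivAt hf hf₁_nonpos (left_mem_Icc.2 ha) h0 ha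

end ThirdOrder

/-- The Taylor remainders of `(1 + t) ^ α` up to order three and all their derivatives have this
shape, so the third-order bound is proved by differentiating three times within the family. -/
noncomputable def rpowSubCubic (c p a₀ a₁ a₂ a₃ t : ℝ) : ℝ :=
  c * (1 + t) ^ p - (a₀ + a₁ * t + a₂ * t ^ 2 + a₃ * t ^ 3)

lemma rpowSubCubic_zero (c p a₀ a₁ a₂ a₃ : ℝ) : rpowSubCubic c p a₀ a₁ a₂ a₃ 0 = c - a₀ := by
  simp [rpowSubCubic]

lemma hasDerivAt_rpowSubCubic (c p a₀ a₁ a₂ a₃ : ℝ) {x : ℝ} (hx : 0 < 1 + x) :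
    HasDerivAt (rpowSubCubic c p a₀ a₁ a₂ a₃)
      (rpowSubCubic (c * p) (p - 1) a₁ (2 * a₂) (3 * a₃) 0 x) x := by
  have hrpow := ((hasDerivAt_id x).const_add 1).rpow_const (p := p) (Or.inl hx.ne')
  have hpoly := ((((hasDerivAt_id x).const_mul a₁).const_add a₀).add
    ((hasDerivAt_pow 2 x).const_mul a₂)).add ((hasDerivAt_pow 3 x).const_mul a₃)
  have h : HasDerivAt (rpowSubCubic c p a₀ a₁ a₂ a₃) _ x := (hrpow.const_mul c).sub hpoly
  refine h.congr_deriv ?_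
  simp only [rpowSubCubic, id]
  push_cast
  ring

section CubicTaylor

variable {α u : ℝ}

lemma cubic_taylor_le_one_add_rpow_of_nonneg (hα₀ : 0 < α) (hα₁ : α < 1) (hu : 0 ≤ u) :
    1 + α * u + α * (α - 1) / 2 * u ^ 2 - 4 * α * (α - 1) * (α - 2) / 3 * u ^ 3
      ≤ (1 + u) ^ α := by
  have := nonneg_of_third_deriv_nonneg hu
    (fun x hx => hasDerivAt_rpowSubCubic 1 α 1 α (α * (α - 1) / 2)
      (-(4 * α * (α - 1) * (α - 2) / 3)) (by linarith [hx.1]))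
    (fun x hx => hasDerivAt_rpowSubCubic _ _ _ _ _ _ (by linarith [hx.1]))
    (fun x hx => hasDerivAt_rpowSubCubic _ _ _ _ _ _ (by linarith [hx.1]))
    (by simp [rpowSubCubic_zero]) (by simp [rpowSubCubic_zero])
    (by simp [rpowSubCubic_zero]; ring)
    (fun x hx => by
      have : 0 ≤ (1 + x) ^ (α - 1 - 1 - 1) := Real.rpow_nonneg (by linarith [hx.1]) _
      simp only [rpowSubCubic]
      nlinarith [mul_pos hα₀ (mul_pos_of_neg_of_neg (by linarith : α - 1 < 0)
        (by linarith : α - 2 < 0))])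
  simp only [rpowSubCubic] at this
  linarith

lemma cubic_taylor_le_one_add_rpow_of_nonpos (hα₀ : 0 < α) (hα₁ : α < 1) (hu₁ : -(1 / 2) ≤ u)
    (hu : u ≤ 0) :
    1 + α * u + α * (α - 1) / 2 * u ^ 2 + 4 * α * (α - 1) * (α - 2) / 3 * u ^ 3
      ≤ (1 + u) ^ α := by
  have := nonneg_of_third_deriv_nonpos hu
    (fun x hx => hasDerivAt_rpowSubCubic 1 α 1 α (α * (α - 1) / 2)
      (4 * α * (α - 1) * (α - 2) / 3) (by linarith [hx.1]))
    (fun x hx => hasDerivAt_rpowSubCubic _ _ _ _ _ _ (by linarith [hx.1]))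
    (fun x hx => hasDerivAt_rpowSubCubic _ _ _ _ _ _ (by linarith [hx.1]))
    (by simp [rpowSubCubic_zero]) (by simp [rpowSubCubic_zero])
    (by simp [rpowSubCubic_zero]; ring)
    (fun x hx => by
      have h8 : (1 + x) ^ (α - 1 - 1 - 1) ≤ 8 := calc
        (1 + x) ^ (α - 1 - 1 - 1) ≤ (1 / 2) ^ (α - 1 - 1 - 1) :=
          Real.rpow_le_rpow_of_nonpos (by norm_num) (by linarith [hx.1]) (by linarith)
        _ ≤ (1 / 2) ^ (-3 : ℝ) :=
          Real.rpow_le_rpow_of_exponent_ge (by norm_num) (by norm_num) (by linarith)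
        _ = 8 := by norm_num
      simp only [rpowSubCubic]
      nlinarith [mul_pos hα₀ (mul_pos_of_neg_of_neg (by linarith : α - 1 < 0)
        (by linarith : α - 2 < 0))])
  simp only [rpowSubCubic] at this
  linarith

lemma cubic_taylor_le_one_add_rpow (hα₀ : 0 < α) (hα₁ : α < 1) (hu : |u| ≤ 1 / 2) :
    1 + α * u + α * (α - 1) / 2 * u ^ 2 - 4 * α * (α - 1) * (α - 2) / 3 * |u| ^ 3
      ≤ (1 + u) ^ α := by
  rcases le_total 0 u with hu₀ | hu₀
  · rw [abs_of_nonneg hu₀]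
    exact cubic_taylor_le_one_add_rpow_of_nonneg hα₀ hα₁ hu₀
  · rw [abs_of_nonpos hu₀]
    have := cubic_taylor_le_one_add_rpow_of_nonpos hα₀ hα₁ (by linarith [neg_abs_le u]) hu₀
    linarith

end CubicTaylor

lemma mul_rpow_one_div_pow {σ v : ℝ} {L : ℕ} (hσ : 0 ≤ σ) (hv : 0 ≤ v) (hL : L ≠ 0) (n : ℕ) :
    ((σ ^ L * v) ^ ((1 : ℝ) / L)) ^ n = σ ^ n * v ^ ((n : ℝ) / L) := by
  rw [Real.mul_rpow (pow_nonneg hσ L) hv, one_div, Real.pow_rpow_inv_natCast hσ hL, mul_pow,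
    ← Real.rpow_natCast (v ^ _), ← Real.rpow_mul hv, inv_mul_eq_div]

/-- Third-order lower bound for `g` around a double-root value `σ`: if `Lσ^(2L-2) = λ(L-2)`
and `σ^L - √λ y + λσ^(2-L) = 0`, then for `|τ/σ^L| ≤ 1/2`,
`g((σ^L + τ)^(1/L)) - g(σ) ≥ -(16(L-2)(L-1)λ)/(3L²σ^(3L-2)) |τ|³`. -/
theorem stmt_19 (L : ℕ) (hL : 3 ≤ L) (lam σ y τ : ℝ) (hlam : 0 < lam) (hσ : 0 < σ)
    (hdouble : (L : ℝ) * σ ^ (2 * L - 2) = lam * ((L : ℝ) - 2))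
    (hy : σ ^ L - Real.sqrt lam * y + lam * σ ^ ((2 : ℤ) - (L : ℤ)) = 0)
    (hτ : |τ / σ ^ L| ≤ 1 / 2) :
    (fun x : ℝ => (x ^ L - Real.sqrt lam * y) ^ 2 + lam * L * x ^ 2)
        ((σ ^ L + τ) ^ ((1 : ℝ) / L))
      - (fun x : ℝ => (x ^ L - Real.sqrt lam * y) ^ 2 + lam * L * x ^ 2) σ
      ≥ -(16 * ((L : ℝ) - 2) * ((L : ℝ) - 1) * lam) / (3 * (L : ℝ) ^ 2 * σ ^ (3 * L - 2))
          * |τ| ^ 3 := by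
  have hL' : (3 : ℝ) ≤ L := by exact_mod_cast hL
  have hs : 0 < σ ^ L := pow_pos hσ L
  obtain ⟨u, rfl⟩ : ∃ u, τ = σ ^ L * u := ⟨τ / σ ^ L, by field_simp⟩
  rw [mul_div_cancel_left₀ _ hs.ne'] at hτ
  have hu : 0 < 1 + u := by linarith [neg_abs_le u]
  have hsy : Real.sqrt lam * y = σ ^ L + lam * σ ^ 2 / σ ^ L := by
    rw [zpow_sub₀ hσ.ne', zpow_natCast, zpow_ofNat] at hy
    linear_combination -hy
  have hlam_eq : lam = L * (σ ^ L) ^ 2 / ((L - 2) * σ ^ 2) := by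
    have : (0 : ℝ) < L - 2 := by linarith
    rw [eq_div_iff (by positivity), ← mul_assoc, ← hdouble, mul_assoc, ← pow_mul, ← pow_add]
    congr 2; omega
  have hσ3 : σ ^ (3 * L - 2) = (σ ^ L) ^ 3 / σ ^ 2 := by
    rw [eq_div_iff (by positivity), ← pow_mul, ← pow_add]; congr 1; omega
  have hkey := cubic_taylor_le_one_add_rpow (α := 2 / L) (by positivity)
    ((div_lt_one (by positivity)).2 (by linarith)) hτ
  simp only
  rw [← mul_one_add, mul_rpow_one_div_pow hσ.le hu.le (by omega),
    mul_rpow_one_div_pow hσ.le hu.le (by omega), div_self (by positivity), Real.rpow_one,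
    Nat.cast_ofNat, hsy, abs_mul, abs_of_pos hs, hσ3, ge_iff_le, ← sub_nonneg]
  refine (mul_nonneg (by positivity : 0 ≤ lam * L * σ ^ 2) (sub_nonneg.2 hkey)).trans_eq ?_
  have : (L : ℝ) - 2 ≠ 0 := by linarith
  rw [hlam_eq]
  field_simp
  ring
end
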